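/- arXiv:2209.15142 — 6 statements merged into one kernel-verified Lean document; each statement's English description precedes it below -/
import Mathlib

section
/- Let P be a finite bounded poset with an EL-labeling λ. Suppose m → m' where the polygon on which m and m' differ lies over the interval [b,t] (so m and m' agree outside the open interval (b,t)), and suppose m' covers m in the maximal chain descent order C(P,λ). Then for every saturated chain c from 0̂ to b, the maximal chain c ∪ (m ∩ [b,1̂]) is covered by the maximal chain c ∪ (m' ∩ [b,1̂]) in C(P,λ). -/
/-- A maximal chain of a bounded poset `P`, recorded as a saturated chain
(a list of elements whose consecutive entries are covers) from `⊥` to `⊤`. -/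
structure MaxChain (P : Type*) [PartialOrder P] [BoundedOrder P] where
  elems : List P
  chain' : elems.Chain' (· ⋖ ·)
  head_bot : elems.head? = some ⊥
  last_top : elems.getLast? = some ⊤

variable {P : Type*} [PartialOrder P] [BoundedOrder P]
variable {Λ : Type*} [PartialOrder Λ]

/-- `c` is a saturated chain from `x` to `y`. -/
def IsSatChain (c : List P) (x y : P) : Prop :=
  c.Chain' (· ⋖ ·) ∧ c.head? = some x ∧ c.getLast? = some y

/-- The label sequence of a saturated chain with respect to the edge
labeling `lab`. -/
def labelSeq (lab : P → P → Λ) (c : List P) : List Λ :=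
  List.zipWith lab c c.tail

/-- The chain `c` is ascending: its label sequence weakly increases. -/
def AscLabels (lab : P → P → Λ) (c : List P) : Prop :=
  (labelSeq lab c).Chain' (· ≤ ·)

/-- `lab` is an EL-labeling: every closed interval has a unique ascending
maximal chain which lexicographically strictly precedes all other maximal
chains of that interval. -/
def IsELLabeling (lab : P → P → Λ) : Prop :=
  ∀ x y : P, x < y →
    (∃! c : List P, IsSatChain c x y ∧ AscLabels lab c) ∧
    (∀ c c' : List P, IsSatChain c x y → IsSatChain c' x y →
      AscLabels lab c → c ≠ c' →
      List.Lex (· < ·) (labelSeq lab c) (labelSeq lab c'))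

/-- `m` increases by a polygon move to `m'`: they differ by a polygon over some
interval `[x,y]` (with `m' ∩ (x,y) = {w}` a single new element), the part of `m`
in `[x,y]` is ascending (hence, for an EL-labeling, it is the unique ascending
chain of `[x,y]`), and `x ⋖ w ⋖ y` is a descent at `w`. -/
def ELPolygonMove (lab : P → P → Λ) (m m' : MaxChain P) : Prop :=
  ∃ (a c b : List P) (x w y : P),
    m.elems = a ++ x :: (c ++ y :: b) ∧
    m'.elems = a ++ x :: w :: y :: b ∧
    c ≠ [] ∧ w ∉ c ∧
    AscLabels lab (x :: (c ++ [y])) ∧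
    ¬ lab x w ≤ lab w y

/-- The maximal chain descent order `C(P,λ)`: the reflexive–transitive closure
of increase by polygon moves. -/
def ELCDLe (lab : P → P → Λ) (m m' : MaxChain P) : Prop :=
  Relation.ReflTransGen (ELPolygonMove lab) m m'

/-- Strict order of the maximal chain descent order. -/
def ELCDLt (lab : P → P → Λ) (m m' : MaxChain P) : Prop :=
  ELCDLe lab m m' ∧ m ≠ m'

/-- `m'` covers `m` in the maximal chain descent order. -/
def ELCDCovBy (lab : P → P → Λ) (m m' : MaxChain P) : Prop :=
  ELCDLt lab m m' ∧ ∀ z : MaxChain P, ELCDLt lab m z → ¬ ELCDLt lab z m'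

/-- `lab` is polygon complete: every polygon move gives a cover relation. -/
def ELPolygonComplete (lab : P → P → Λ) : Prop :=
  ∀ m m' : MaxChain P, ELPolygonMove lab m m' → ELCDCovBy lab m m'

/-- `lab` is a polygon strong EL-labeling: for every descent `x ⋖ y ⋖ z`,
the label `λ(y,z)` is strictly smaller than the label `λ(y',z)`, where `y'` is
the coatom of `[x,z]` lying on the unique ascending maximal chain of `[x,z]`. -/
def PolygonStrong (lab : P → P → Λ) : Prop :=
  ∀ x y z y' : P, x ⋖ y → y ⋖ z → ¬ lab x y ≤ lab y z →
    ∀ c : List P, IsSatChain c x z → AscLabels lab c → [y', z] <:+ c →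
      lab y z < lab y' z

/- ======================= auxiliary lemmas ======================= -/

section Aux
set_option linter.unusedSectionVars false

variable (lab : P → P → Λ)

theorem MaxChain.ext' {A B : MaxChain P} (h : A.elems = B.elems) : A = B := by
  cases A; cases B; simpa using h

theorem labelSeq_cons_cons (p q : P) (t : List P) :
    labelSeq lab (p :: q :: t) = lab p q :: labelSeq lab (q :: t) := rfl

theorem labelSeq_join (a : List P) (x : P) (s : List P) :
    labelSeq lab (a ++ x :: s) = labelSeq lab (a ++ [x]) ++ labelSeq lab (x :: s) := by
  induction a with
  | nil => simp [labelSeq]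
  | cons h t ih =>
      cases t with
      | nil => cases s <;> simp [labelSeq]
      | cons h2 t2 =>
          simpa [labelSeq_cons_cons] using ih

theorem lex_append_left {r : Λ → Λ → Prop} {s t : List Λ} (q : List Λ)
    (h : List.Lex r s t) : List.Lex r (q ++ s) (q ++ t) := by
  induction q with
  | nil => exact h
  | cons a q ih => exact List.Lex.cons ih

theorem lex_cancel_left {s t : List Λ} (q : List Λ)
    (h : List.Lex (· < ·) (q ++ s) (q ++ t)) : List.Lex (· < ·) s t := by
  induction q with
  | nil => exact h
  | cons a q ih =>
      cases h with
      | rel h => exact absurd h (lt_irrefl a)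
      | cons h => exact ih h

theorem lex_cons_inv {α β : Λ} {A D : List Λ}
    (h : List.Lex (· < ·) (α :: A) (β :: D)) :
    α < β ∨ (α = β ∧ List.Lex (· < ·) A D) := by
  cases h with
  | rel h => exact Or.inl h
  | cons h => exact Or.inr ⟨rfl, h⟩

theorem lex_nil_right {A : List Λ} (h : List.Lex (· < ·) A ([] : List Λ)) : False := by
  cases h

theorem lex_trans {l1 l2 l3 : List Λ}
    (h1 : List.Lex (· < ·) l1 l2) (h2 : List.Lex (· < ·) l2 l3) :
    List.Lex (· < ·) l1 l3 := by
  induction h1 generalizing l3 with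
  | nil =>
      cases h2 with
      | rel h => exact List.Lex.nil
      | cons h => exact List.Lex.nil
  | @rel a l1' b l2' hab =>
      cases h2 with
      | rel h => exact List.Lex.rel (lt_trans hab h)
      | cons h => exact List.Lex.rel hab
  | @cons a l1' l2' h ih =>
      cases h2 with
      | rel h => exact List.Lex.rel h
      | cons h => exact List.Lex.cons (ih h)

/-- Key fact: in an EL-labeling, a polygon move strictly increases the first
label of the polygon. -/
theorem polygon_first_lt (hEL : IsELLabeling lab) {x1 w1 y1 c0 : P} {ct : List P}
    (hch : List.Chain' (· ⋖ ·) (x1 :: ((c0 :: ct) ++ [y1])))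
    (hch2 : List.Chain' (· ⋖ ·) [x1, w1, y1])
    (hw1 : w1 ∉ (c0 :: ct))
    (hasc : AscLabels lab (x1 :: ((c0 :: ct) ++ [y1])))
    (hdes : ¬ lab x1 w1 ≤ lab w1 y1) :
    lab x1 c0 < lab x1 w1 := by
  have hx1w : x1 ⋖ w1 := (List.isChain_cons_cons.mp hch2).1
  have hw1y : w1 ⋖ y1 := (List.isChain_cons_cons.mp (List.isChain_cons_cons.mp hch2).2).1
  have hxy : x1 < y1 := lt_trans hx1w.lt hw1y.lt
  have hlastA : (x1 :: ((c0 :: ct) ++ [y1])).getLast? = some y1 := by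
    rw [show x1 :: ((c0 :: ct) ++ [y1]) = (x1 :: c0 :: ct) ++ [y1] by simp]
    exact List.getLast?_concat
  have satA : IsSatChain (x1 :: ((c0 :: ct) ++ [y1])) x1 y1 := ⟨hch, rfl, hlastA⟩
  have satD : IsSatChain [x1, w1, y1] x1 y1 := ⟨hch2, rfl, by simp⟩
  have hne : (x1 :: ((c0 :: ct) ++ [y1])) ≠ [x1, w1, y1] := by
    intro h
    simp only [List.cons_append, List.cons.injEq] at h
    exact hw1 (h.2.1 ▸ List.mem_cons_self)
  have hlex := (hEL x1 y1 hxy).2 _ _ satA satD hasc hne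
  have hlex' : List.Lex (· < ·) (lab x1 c0 :: labelSeq lab (c0 :: (ct ++ [y1])))
      [lab x1 w1, lab w1 y1] := hlex
  rcases lex_cons_inv hlex' with h | ⟨heq, h2⟩
  · exact h
  · exfalso
    cases ct with
    | nil =>
        have h2' : List.Lex (· < ·) [lab c0 y1] [lab w1 y1] := h2
        rcases lex_cons_inv h2' with h3 | ⟨_, h4⟩
        · have hle : lab x1 c0 ≤ lab c0 y1 :=
            (List.isChain_cons_cons.mp (hasc : List.Chain' (· ≤ ·)
              (lab x1 c0 :: lab c0 y1 :: []))).1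
          exact hdes (le_of_lt (heq ▸ (lt_of_le_of_lt hle h3)))
        · exact lex_nil_right h4
    | cons c2 ct2 =>
        have h2' : List.Lex (· < ·)
            (lab c0 c2 :: labelSeq lab (c2 :: (ct2 ++ [y1]))) [lab w1 y1] := h2
        rcases lex_cons_inv h2' with h3 | ⟨_, h4⟩
        · have hle : lab x1 c0 ≤ lab c0 c2 :=
            (List.isChain_cons_cons.mp (hasc : List.Chain' (· ≤ ·)
              (lab x1 c0 :: lab c0 c2 :: labelSeq lab (c2 :: (ct2 ++ [y1]))))).1
          exact hdes (le_of_lt (heq ▸ (lt_of_le_of_lt hle h3)))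
        · exact lex_nil_right h4

/-- Chain' facts for the two sides of a polygon move, extracted from the
maximal chains. -/
theorem move_chains {p q : MaxChain P} {a1 : List P} {x1 w1 y1 c0 : P} {ct b1 : List P}
    (hp : p.elems = a1 ++ x1 :: ((c0 :: ct) ++ y1 :: b1))
    (hq : q.elems = a1 ++ x1 :: w1 :: y1 :: b1) :
    List.Chain' (· ⋖ ·) (x1 :: ((c0 :: ct) ++ [y1])) ∧
    List.Chain' (· ⋖ ·) [x1, w1, y1] := by
  constructor
  · have h := p.chain'
    rw [hp] at h
    have h1 : List.Chain' (· ⋖ ·) (x1 :: ((c0 :: ct) ++ y1 :: b1)) :=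
      (List.isChain_append.mp h).2.1
    rw [show x1 :: ((c0 :: ct) ++ y1 :: b1) = (x1 :: ((c0 :: ct) ++ [y1])) ++ b1 by simp] at h1
    exact (List.isChain_append.mp h1).1
  · have h := q.chain'
    rw [hq] at h
    have h1 : List.Chain' (· ⋖ ·) (x1 :: w1 :: y1 :: b1) :=
      (List.isChain_append.mp h).2.1
    rw [show x1 :: w1 :: y1 :: b1 = [x1, w1, y1] ++ b1 by simp] at h1
    exact (List.isChain_append.mp h1).1

/-- A polygon move strictly increases the label sequence lexicographically. -/
theorem move_lex (hEL : IsELLabeling lab) {p q : MaxChain P}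
    (h : ELPolygonMove lab p q) :
    List.Lex (· < ·) (labelSeq lab p.elems) (labelSeq lab q.elems) := by
  obtain ⟨a1, c1, b1, x1, w1, y1, hp1, hp2, hc1, hw1, hasc1, hdes1⟩ := h
  cases c1 with
  | nil => exact absurd rfl hc1
  | cons c0 ct =>
    obtain ⟨hA, hD⟩ := move_chains hp1 hp2
    have key := polygon_first_lt lab hEL hA hD hw1 hasc1 hdes1
    rw [hp1, hp2, labelSeq_join lab a1 x1 (c0 :: ct ++ y1 :: b1),
      labelSeq_join lab a1 x1 (w1 :: y1 :: b1)]
    apply lex_append_left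
    exact List.Lex.rel key

theorem le_lex (hEL : IsELLabeling lab) {p q : MaxChain P} (h : ELCDLe lab p q) :
    p = q ∨ List.Lex (· < ·) (labelSeq lab p.elems) (labelSeq lab q.elems) := by
  induction h with
  | refl => exact Or.inl rfl
  | tail _ hstep ih =>
      rcases ih with rfl | hx
      · exact Or.inr (move_lex lab hEL hstep)
      · exact Or.inr (lex_trans hx (move_lex lab hEL hstep))


theorem build_max (lab : P → P → Λ) {m m' : MaxChain P} {a c bl : List P} {x w y : P}
    (hm : m.elems = a ++ x :: (c ++ y :: bl))
    (hm' : m'.elems = a ++ x :: w :: y :: bl)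
    {r : List P} (hr : IsSatChain r ⊥ x)
    {z : MaxChain P} {s : List P} (hz : z.elems = r ++ s) :
    ∃ ZC : MaxChain P, ZC.elems = a ++ x :: s := by
  -- x is not the top element
  have hchm' := m'.chain'
  rw [hm', show a ++ x :: w :: y :: bl = a ++ (x :: w :: y :: bl) from rfl] at hchm'
  have hxw : x ⋖ w := (List.isChain_cons_cons.mp (List.isChain_append.mp hchm').2.1).1
  have hxtop : x ≠ ⊤ := fun h => not_top_lt (h ▸ hxw.lt)
  have hsne : s ≠ [] := by
    intro h
    subst h
    have htop := z.last_top
    rw [hz, List.append_nil, hr.2.2] at htop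
    exact hxtop (Option.some.inj htop)
  -- chain property
  have hchainax : List.Chain' (· ⋖ ·) (a ++ [x]) := by
    have h := m.chain'
    rw [hm, show a ++ x :: (c ++ y :: bl) = (a ++ [x]) ++ (c ++ y :: bl) by simp] at h
    exact (List.isChain_append.mp h).1
  have hchz := z.chain'
  rw [hz] at hchz
  have hchs : List.Chain' (· ⋖ ·) s := (List.isChain_append.mp hchz).2.1
  have hjun' := (List.isChain_append.mp hchz).2.2
  have hch : List.Chain' (· ⋖ ·) ((a ++ [x]) ++ s) := by
    refine List.isChain_append.mpr ⟨hchainax, hchs, ?_⟩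
    intro u hu t ht
    rw [List.getLast?_concat] at hu
    have hux : x = u := by simpa using hu
    subst hux
    refine hjun' x ?_ t ht
    rw [hr.2.2]; simp
  have hheq : ∀ s t : List P, (a ++ x :: s).head? = (a ++ x :: t).head? := by
    intro s t; cases a <;> simp
  refine ⟨⟨a ++ x :: s, ?_, ?_, ?_⟩, rfl⟩
  · rw [show a ++ x :: s = (a ++ [x]) ++ s by simp]; exact hch
  · rw [hheq s (c ++ y :: bl), ← hm]; exact m.head_bot
  · have htop := z.last_top
    rw [hz, List.getLast?_append_of_ne_nil r hsne] at htop
    rw [show a ++ x :: s = (a ++ [x]) ++ s by simp,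
      List.getLast?_append_of_ne_nil (a ++ [x]) hsne]
    exact htop

theorem star2 (lab : P → P → Λ) (hEL : IsELLabeling lab)
    {m m' v : MaxChain P} {a c bl : List P} {x w y : P} {r : List P}
    (hm : m.elems = a ++ x :: (c ++ y :: bl))
    (hm' : m'.elems = a ++ x :: w :: y :: bl)
    (hr : IsSatChain r ⊥ x)
    (hv : v.elems = r ++ w :: y :: bl) :
    ∀ p q : MaxChain P, ELCDLe lab p q → ELCDLe lab q v →
      ∀ sp, p.elems = r ++ sp → ∀ PC : MaxChain P, PC.elems = a ++ x :: sp →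
      ∃ (sq : List P) (QC : MaxChain P),
        q.elems = r ++ sq ∧ QC.elems = a ++ x :: sq ∧ ELCDLe lab PC QC := by
  intro p q hpq hqv
  induction hpq using Relation.ReflTransGen.head_induction_on with
  | refl =>
      intro sp hp PC hPC
      exact ⟨sp, PC, hp, hPC, Relation.ReflTransGen.refl⟩
  | @head p p₁ hstep hpath ih =>
      intro sp hp PC hPC
      obtain ⟨a1, c1, b1, x1, w1, y1, hp1, hp2, hc1, hw1, hasc1, hdes1⟩ := hstep
      cases c1 with
      | nil => exact absurd rfl hc1
      | cons c0 ct =>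
      -- r is a prefix of a1 ++ [x1]
      have hpre : ∃ e, a1 ++ [x1] = r ++ e := by
        have h1 : r <+: p.elems := ⟨sp, hp.symm⟩
        have h2 : a1 ++ [x1] <+: p.elems := ⟨(c0 :: ct) ++ y1 :: b1, by rw [hp1]; simp⟩
        rcases List.prefix_or_prefix_of_prefix h2 h1 with hq2 | hq2
        · obtain ⟨rt, hrt⟩ := hq2
          cases rt with
          | nil => exact ⟨[], by rw [← hrt]; simp⟩
          | cons rt0 rtt =>
              exfalso
              have hbase : r ++ sp = a1 ++ x1 :: (c0 :: ct ++ y1 :: b1) := by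
                rw [← hp, hp1]
              rw [← hrt] at hbase
              have hE2 : rt0 :: (rtt ++ sp) = c0 :: (ct ++ y1 :: b1) := by
                apply List.append_cancel_left (as := a1 ++ [x1])
                simpa using hbase
              have hco : rt0 = c0 := by
                simpa using congrArg List.head? hE2
              obtain ⟨hA, hD⟩ := move_chains hp1 hp2
              have key := polygon_first_lt lab hEL hA hD hw1 hasc1 hdes1
              have hle2 : ELCDLe lab p₁ v := Relation.ReflTransGen.trans hpath hqv
              rcases le_lex lab hEL hle2 with heqv | hlex
              · have helv : p₁.elems = v.elems := congrArg _ heqv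
                rw [hp2, hv, ← hrt, show ((a1 ++ [x1]) ++ rt0 :: rtt) ++ w :: y :: bl =
                  (a1 ++ [x1]) ++ (rt0 :: (rtt ++ w :: y :: bl)) by simp,
                  show a1 ++ x1 :: w1 :: y1 :: b1 =
                  (a1 ++ [x1]) ++ (w1 :: y1 :: b1) by simp] at helv
                have := List.append_cancel_left helv
                have hwc : w1 = c0 := by simpa [hco] using congrArg List.head? this
                exact hw1 (hwc ▸ List.mem_cons_self)
              · have hv' : v.elems = a1 ++ x1 :: (rt0 :: (rtt ++ w :: y :: bl)) := by
                  rw [hv, ← hrt]; simp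
                rw [hp2, hv', labelSeq_join lab a1 x1 (w1 :: y1 :: b1),
                  labelSeq_join lab a1 x1 (rt0 :: (rtt ++ w :: y :: bl))] at hlex
                have hlex2 := lex_cancel_left _ hlex
                have hlex3 : List.Lex (· < ·)
                    (lab x1 w1 :: labelSeq lab (w1 :: y1 :: b1))
                    (lab x1 rt0 :: labelSeq lab (rt0 :: (rtt ++ w :: y :: bl))) := hlex2
                rcases lex_cons_inv hlex3 with hlt2 | ⟨heq2, _⟩
                · rw [hco] at hlt2
                  exact lt_irrefl _ (lt_trans key hlt2)
                · rw [hco] at heq2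
                  exact key.ne' heq2
        · obtain ⟨e, he⟩ := hq2
          exact ⟨e, he.symm⟩
      obtain ⟨e, he⟩ := hpre
      have hsp : sp = e ++ ((c0 :: ct) ++ y1 :: b1) := by
        apply List.append_cancel_left (as := r)
        rw [← hp, hp1, show a1 ++ x1 :: ((c0 :: ct) ++ y1 :: b1) =
          (a1 ++ [x1]) ++ ((c0 :: ct) ++ y1 :: b1) by simp, he, List.append_assoc]
      have hq1 : p₁.elems = r ++ (e ++ (w1 :: y1 :: b1)) := by
        rw [hp2, show a1 ++ x1 :: w1 :: y1 :: b1 =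
          (a1 ++ [x1]) ++ (w1 :: y1 :: b1) by simp, he, List.append_assoc]
      obtain ⟨PC₁, hPC₁⟩ := build_max lab hm hm' hr hq1
      have hmove : ELPolygonMove lab PC PC₁ := by
        rcases List.eq_nil_or_concat e with rfl | ⟨ed, la, rfl⟩
        · have hx1 : x1 = x := by
            have := congrArg List.getLast? he
            rw [List.getLast?_concat, List.append_nil, hr.2.2] at this
            exact Option.some.inj this
          subst hx1
          refine ⟨a, c0 :: ct, b1, x1, w1, y1, ?_, ?_, hc1, hw1, hasc1, hdes1⟩
          · rw [hPC, hsp]; simp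
          · rw [hPC₁]; simp
        · rw [List.concat_eq_append] at he hq1 hsp hPC₁
          have hla : la = x1 := by
            have := congrArg List.getLast? he
            rw [List.getLast?_concat, show r ++ (ed ++ [la]) = (r ++ ed) ++ [la] by simp,
              List.getLast?_concat] at this
            exact (Option.some.inj this).symm
          subst hla
          refine ⟨a ++ x :: ed, c0 :: ct, b1, la, w1, y1, ?_, ?_, hc1, hw1, hasc1, hdes1⟩
          · rw [hPC, hsp]; simp
          · rw [hPC₁]; simp
      obtain ⟨sq, QC, h1, h2, h3⟩ := ih (e ++ (w1 :: y1 :: b1)) hq1 PC₁ hPC₁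
      exact ⟨sq, QC, h1, h2, Relation.ReflTransGen.head hmove h3⟩

end Aux

/-- for an EL-labeling, whether a polygon move gives a cover
relation does not depend on the part of the chains below the bottom of the
polygon: if `m → m'` with polygon over `[x,y]` and `m'` covers `m` in the
maximal chain descent order, then for every saturated chain `r` from `⊥` to
`x`, the chain `r ∪ (m ∩ [x,⊤])` is covered by `r ∪ (m' ∩ [x,⊤])`. -/
theorem statement10 [Fintype P] (lab : P → P → Λ) (hEL : IsELLabeling lab)
    (m m' : MaxChain P) (a c bl : List P) (x w y : P)
    (hm : m.elems = a ++ x :: (c ++ y :: bl))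
    (hm' : m'.elems = a ++ x :: w :: y :: bl)
    (hc : c ≠ []) (hw : w ∉ c)
    (hasc : AscLabels lab (x :: (c ++ [y])))
    (hdes : ¬ lab x w ≤ lab w y)
    (hcov : ELCDCovBy lab m m') :
    ∀ r : List P, IsSatChain r ⊥ x →
      ∀ u v : MaxChain P, u.elems = r ++ (c ++ y :: bl) →
        v.elems = r ++ w :: y :: bl → ELCDCovBy lab u v := by
  intro r hr u v hu hv
  -- r ends in x
  rcases List.eq_nil_or_concat r with rfl | ⟨rd, xe, hrd⟩
  · exact absurd hr.2.1 (by simp)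
  rw [List.concat_eq_append] at hrd
  have hxe : x = xe := by
    have := hr.2.2
    rw [hrd, List.getLast?_concat] at this
    exact (Option.some.inj this).symm
  subst hxe
  subst hrd
  -- the move u → v
  have hmove_uv : ELPolygonMove lab u v :=
    ⟨rd, c, bl, x, w, y, by rw [hu]; simp, by rw [hv]; simp, hc, hw, hasc, hdes⟩
  have hne_uv : u ≠ v := by
    intro h
    have h2 := List.append_cancel_left (as := rd ++ [x])
      (by rw [← hu, ← hv, h] : (rd ++ [x]) ++ (c ++ y :: bl) = (rd ++ [x]) ++ (w :: y :: bl))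
    cases c with
    | nil => exact hc rfl
    | cons c0 ct =>
        have hc0 : c0 = w := by simpa using congrArg List.head? h2
        have hct : ct = [] := by
          have hlen := congrArg List.length h2
          simpa using hlen
        subst hct
        exact hw (by simp [hc0])
  refine ⟨⟨Relation.ReflTransGen.single hmove_uv, hne_uv⟩, ?_⟩
  intro z hz1 hz2
  obtain ⟨sz, ZC, hzel, hZC, hmZC⟩ :=
    star2 lab hEL hm hm' hr hv u z hz1.1 hz2.1 (c ++ y :: bl) hu m hm
  obtain ⟨sv, QC, hvel, hQC, hZQ⟩ :=
    star2 lab hEL hm hm' hr hv z v hz2.1 Relation.ReflTransGen.refl sz hzel ZC hZC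
  have hsv : sv = w :: y :: bl :=
    List.append_cancel_left (by rw [← hvel, hv])
  have hQm' : QC = m' := MaxChain.ext' (by rw [hQC, hsv, hm'])
  have hZCm : ZC ≠ m := by
    intro h
    apply hz1.2
    symm
    apply MaxChain.ext'
    have h2 : (a ++ [x]) ++ sz = (a ++ [x]) ++ (c ++ y :: bl) := by
      have := h ▸ hZC
      rw [hm] at this
      simpa using this.symm
    rw [hzel, hu, List.append_cancel_left h2]
  have hZCm' : ZC ≠ m' := by
    intro h
    apply hz2.2
    apply MaxChain.ext'
    have h2 : (a ++ [x]) ++ sz = (a ++ [x]) ++ (w :: y :: bl) := by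
      have := h ▸ hZC
      rw [hm'] at this
      simpa using this.symm
    rw [hzel, hv, List.append_cancel_left h2]
  exact (hcov.2 ZC ⟨hmZC, Ne.symm hZCm⟩) ⟨hQm' ▸ hZQ, hZCm'⟩
end

section
/- Let P be a finite bounded poset with a CL-labeling λ. Suppose m → m' and the unique element x with m' \ m = {x} satisfies x ⋖ 1̂. Then m' covers m in the maximal chain descent order C(P,λ). -/
variable {P : Type*} [PartialOrder P] [BoundedOrder P] [DecidableEq P]
variable {Λ : Type*} [PartialOrder Λ]

/-- `lab` is a chain-edge labeling: the label of edge `j` (the edge between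
positions `j` and `j+1` of the chain, `0`-indexed) depends only on the
bottom part of the chain below that edge. -/
def IsChainEdgeLabeling (lab : MaxChain P → ℕ → Λ) : Prop :=
  ∀ m m' : MaxChain P, ∀ i : ℕ,
    m.elems.take (i + 1) = m'.elems.take (i + 1) → ∀ j, j < i → lab m j = lab m' j

/-- `r` is a root: a saturated chain from `⊥` to `x`. -/
def IsRootTo (r : List P) (x : P) : Prop :=
  r.Chain' (· ⋖ ·) ∧ r.head? = some (⊥ : P) ∧ r.getLast? = some x

/-- The maximal chain `m` lies in the rooted interval `[x,y]_r`, i.e. it begins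
with the root `r` (whose last entry is `x`) and passes through `y`. -/
def InRooted (m : MaxChain P) (r : List P) (y : P) : Prop :=
  m.elems.take r.length = r ∧ y ∈ m.elems

/-- The labels of `m` weakly ascend along the edges `i, i+1, …, j-1`
(the edges of the restriction of `m` between positions `i` and `j`). -/
def RestrAscending (lab : MaxChain P → ℕ → Λ) (m : MaxChain P) (i j : ℕ) : Prop :=
  ∀ k, i ≤ k → k + 2 ≤ j → lab m k ≤ lab m (k + 1)

/-- The restriction of the maximal chain `m` to the rooted interval `[x,y]_r`,
where `x` is the top of the root `r`. -/
def restrictChain (m : MaxChain P) (r : List P) (y : P) : List P :=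
  (m.elems.take (m.elems.idxOf y + 1)).drop (r.length - 1)

/-- The label sequence of `m` along edges `i, i+1, …, j-1`. -/
def restrLabels (lab : MaxChain P → ℕ → Λ) (m : MaxChain P) (i j : ℕ) : List Λ :=
  (List.range (j - i)).map fun k => lab m (i + k)

/-- The CL condition for the rooted interval with root `r` and top `y`:
there is an ascending maximal chain of the rooted interval, any two ascending
ones coincide, and the ascending one lexicographically strictly precedes every
other maximal chain of the rooted interval. -/
def CLAt (lab : MaxChain P → ℕ → Λ) (r : List P) (y : P) : Prop :=
  (∃ m : MaxChain P, InRooted m r y ∧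
      RestrAscending lab m (r.length - 1) (m.elems.idxOf y)) ∧
  (∀ m m' : MaxChain P, InRooted m r y → InRooted m' r y →
      RestrAscending lab m (r.length - 1) (m.elems.idxOf y) →
      RestrAscending lab m' (r.length - 1) (m'.elems.idxOf y) →
      restrictChain m r y = restrictChain m' r y) ∧
  (∀ m m' : MaxChain P, InRooted m r y → InRooted m' r y →
      RestrAscending lab m (r.length - 1) (m.elems.idxOf y) →
      restrictChain m r y ≠ restrictChain m' r y →
      List.Lex (· < ·) (restrLabels lab m (r.length - 1) (m.elems.idxOf y))
        (restrLabels lab m' (r.length - 1) (m'.elems.idxOf y)))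

/-- `lab` is a CL-labeling: it is a chain-edge labeling and every rooted
interval has a unique ascending maximal chain which lexicographically strictly
precedes all other maximal chains of that rooted interval. -/
def IsCLLabeling (lab : MaxChain P → ℕ → Λ) : Prop :=
  IsChainEdgeLabeling lab ∧
  ∀ (r : List P) (x y : P), IsRootTo r x → x < y → CLAt lab r y

/-- `m` increases by a polygon move to `m'`: they differ by a polygon over some
interval `[x,y]` (with `m' ∩ (x,y) = {w}` a single new element), the part of `m`
in `[x,y]` is ascending (hence, for a CL-labeling, it is the unique ascending
chain of the rooted interval), and `x ⋖ w ⋖ y` is a descent at `w`. -/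
def PolygonMove (lab : MaxChain P → ℕ → Λ) (m m' : MaxChain P) : Prop :=
  ∃ (a c b : List P) (x w y : P),
    m.elems = a ++ x :: (c ++ y :: b) ∧
    m'.elems = a ++ x :: w :: y :: b ∧
    c ≠ [] ∧ w ∉ c ∧
    RestrAscending lab m a.length (a.length + c.length + 1) ∧
    ¬ lab m' a.length ≤ lab m' (a.length + 1)

/-- The maximal chain descent order `C(P,λ)`: the reflexive–transitive closure
of increase by polygon moves. -/
def CDLe (lab : MaxChain P → ℕ → Λ) (m m' : MaxChain P) : Prop :=
  Relation.ReflTransGen (PolygonMove lab) m m'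

/-- Strict order of the maximal chain descent order. -/
def CDLt (lab : MaxChain P → ℕ → Λ) (m m' : MaxChain P) : Prop :=
  CDLe lab m m' ∧ m ≠ m'

/-- `m'` covers `m` in the maximal chain descent order. -/
def CDCovBy (lab : MaxChain P → ℕ → Λ) (m m' : MaxChain P) : Prop :=
  CDLt lab m m' ∧ ∀ z : MaxChain P, CDLt lab m z → ¬ CDLt lab z m'

/-- `lab` is polygon complete: every polygon move gives a cover relation. -/
def PolygonComplete (lab : MaxChain P → ℕ → Λ) : Prop :=
  ∀ m m' : MaxChain P, PolygonMove lab m m' → CDCovBy lab m m'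

/-- `m` has a descent at its (interior) position `i`. -/
def DescentAt (lab : MaxChain P → ℕ → Λ) (m : MaxChain P) (i : ℕ) : Prop :=
  0 < i ∧ i + 1 < m.elems.length ∧ ¬ lab m (i - 1) ≤ lab m i

/-- `m` has a descent at its interior element `z`. -/
def DescentElem (lab : MaxChain P → ℕ → Λ) (m : MaxChain P) (z : P) : Prop :=
  ∃ i : ℕ, m.elems[i]? = some z ∧ DescentAt lab m i

/-- `m` has a descending label sequence: a descent at every interior element. -/
def DescendingMC (lab : MaxChain P → ℕ → Λ) (m : MaxChain P) : Prop :=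
  ∀ i : ℕ, 0 < i → i + 1 < m.elems.length → ¬ lab m (i - 1) ≤ lab m i

/-- `m` has an ascending (weakly increasing) label sequence. -/
def AscendingMC (lab : MaxChain P → ℕ → Λ) (m : MaxChain P) : Prop :=
  ∀ i : ℕ, i + 3 ≤ m.elems.length → lab m i ≤ lab m (i + 1)

/-! ### Auxiliary lemmas for statement 11 -/

section Aux11

variable {lab : MaxChain P → ℕ → Λ}

lemma lex_irrefl' : ∀ l : List Λ, ¬ List.Lex (· < ·) l l := by
  intro l
  induction l with
  | nil => intro h; cases h
  | cons a l ih =>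
    intro h
    cases h with
    | cons h => exact ih h
    | rel h => exact lt_irrefl _ h

lemma lex_trans' {l₁ l₂ l₃ : List Λ} (h₁ : List.Lex (· < ·) l₁ l₂)
    (h₂ : List.Lex (· < ·) l₂ l₃) : List.Lex (· < ·) l₁ l₃ := by
  induction h₁ generalizing l₃ with
  | nil =>
    cases h₂ with
    | cons _ => exact List.Lex.nil
    | rel _ => exact List.Lex.nil
  | cons h ih =>
    cases h₂ with
    | cons h₂ => exact List.Lex.cons (ih h₂)
    | rel h₂ => exact List.Lex.rel h₂
  | rel h =>
    cases h₂ with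
    | cons h₂ => exact List.Lex.rel h
    | rel h₂ => exact List.Lex.rel (h.trans h₂)

lemma lex_of_agree_lt :
    ∀ (i : ℕ) (N N' : ℕ) (f g : ℕ → Λ), i < N → i < N' →
      (∀ j, j < i → f j = g j) → f i < g i →
      List.Lex (· < ·) ((List.range N).map f) ((List.range N').map g) := by
  intro i
  induction i with
  | zero =>
    intro N N' f g hN hN' _ hlt
    obtain ⟨N, rfl⟩ : ∃ k, N = k + 1 := ⟨N - 1, by omega⟩
    obtain ⟨N', rfl⟩ : ∃ k, N' = k + 1 := ⟨N' - 1, by omega⟩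
    rw [List.range_succ_eq_map, List.range_succ_eq_map]
    simp only [List.map_cons]
    exact List.Lex.rel hlt
  | succ i ih =>
    intro N N' f g hN hN' hagree hlt
    obtain ⟨N, rfl⟩ : ∃ k, N = k + 1 := ⟨N - 1, by omega⟩
    obtain ⟨N', rfl⟩ : ∃ k, N' = k + 1 := ⟨N' - 1, by omega⟩
    rw [List.range_succ_eq_map, List.range_succ_eq_map]
    simp only [List.map_cons, List.map_map]
    have h0 : f 0 = g 0 := hagree 0 (by omega)
    rw [h0]
    exact List.Lex.cons (ih N N' (f ∘ Nat.succ) (g ∘ Nat.succ) (by omega) (by omega)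
      (fun j hj => hagree (j + 1) (by omega)) hlt)

lemma lex_two' {a0 a1 b0 b1 : Λ} {t : List Λ} (asc : a0 ≤ a1) (desc : ¬ b0 ≤ b1)
    (h : List.Lex (· < ·) (a0 :: a1 :: t) [b0, b1]) : a0 < b0 := by
  cases h with
  | rel h => exact h
  | cons h =>
    cases h with
    | rel h' => exact absurd (asc.trans h'.le) desc
    | cons h' => cases h'

lemma map_range_two_cons (f : ℕ → Λ) (k : ℕ) :
    (List.range (k + 2)).map f
      = f 0 :: f 1 :: ((List.range k).map fun i => f (i + 2)) := by
  rw [List.range_succ_eq_map, List.range_succ_eq_map]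
  simp only [List.map_cons, List.map_map]
  rfl

lemma take_eq_root {l a : List P} {x : P} {r : List P}
    (h : l = a ++ x :: r) : l.take (a.length + 1) = a ++ [x] := by
  subst h
  rw [show a ++ x :: r = (a ++ [x]) ++ r by simp]
  exact List.take_left' (by simp)

lemma indexOf_middle : ∀ (l₁ : List P) {l₂ : List P} {y : P}, y ∉ l₁ →
    (l₁ ++ y :: l₂).idxOf y = l₁.length := by
  intro l₁
  induction l₁ with
  | nil => intro l₂ y _; simp
  | cons a t ih =>
    intro l₂ y h
    have h1 : y ≠ a ∧ y ∉ t := by simpa using h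
    simp only [List.cons_append, List.length_cons]
    rw [List.idxOf_cons_ne _ (Ne.symm h1.1), ih h1.2]

lemma maxChain_pairwise (n : MaxChain P) : n.elems.Pairwise (· < ·) :=
  List.isChain_iff_pairwise.mp (n.chain'.imp fun _ _ h => h.lt)

lemma maxChain_nodup (n : MaxChain P) : n.elems.Nodup :=
  (maxChain_pairwise n).imp fun h => ne_of_lt h

lemma chain'_middle {R : P → P → Prop} :
    ∀ (l₁ : List P) {u v : P} {l₂ : List P},
      List.Chain' R (l₁ ++ u :: v :: l₂) → R u v := by
  intro l₁
  induction l₁ with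
  | nil => intro u v l₂ h; exact (List.isChain_cons_cons.mp h).1
  | cons a t ih => intro u v l₂ h; exact ih h.tail

lemma MaxChain.ext'_s11 {n n' : MaxChain P} (h : n.elems = n'.elems) : n = n' := by
  cases n; cases n'
  cases h
  rfl

lemma anat {n : MaxChain P} {a c b : List P} {x y : P}
    (hn : n.elems = a ++ x :: (c ++ y :: b)) :
    n.elems.take (a.length + 1) = a ++ [x] ∧
    n.elems.idxOf y = a.length + c.length + 1 ∧
    restrictChain n (a ++ [x]) y = x :: (c ++ [y]) ∧
    InRooted n (a ++ [x]) y ∧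
    IsRootTo (a ++ [x]) x ∧
    x < y := by
  have hnd : n.elems.Nodup := maxChain_nodup n
  have hpw := maxChain_pairwise n
  rw [hn] at hnd hpw
  have e : a ++ x :: (c ++ y :: b) = (a ++ x :: c) ++ y :: b := by simp
  have hy : y ∉ a ++ x :: c := by
    intro hmem
    rw [e] at hnd
    exact (List.nodup_append'.mp hnd).2.2 hmem List.mem_cons_self
  have hidx : n.elems.idxOf y = a.length + c.length + 1 := by
    rw [hn, e, indexOf_middle _ hy]
    simp only [List.length_append, List.length_cons, List.length_nil]
    omega
  have htake : n.elems.take (a.length + 1) = a ++ [x] := take_eq_root hn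
  refine ⟨htake, hidx, ?_, ?_, ?_, ?_⟩
  · unfold restrictChain
    rw [hidx]
    have e2 : n.elems = (a ++ (x :: (c ++ [y]))) ++ b := by rw [hn]; simp
    rw [e2, List.take_left' (by simp only [List.length_append, List.length_cons, List.length_nil]; omega)]
    rw [show (a ++ [x]).length - 1 = a.length by simp]
    exact List.drop_left' rfl
  · exact ⟨by rw [show (a ++ [x]).length = a.length + 1 by simp]; exact htake,
      by rw [hn]; simp⟩
  · refine ⟨n.chain'.prefix ⟨c ++ y :: b, by rw [hn]; simp⟩, ?_, List.getLast?_concat⟩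
    have hb := n.head_bot
    rw [hn] at hb
    cases a with
    | nil => simpa using hb
    | cons a0 t =>
      simp only [List.cons_append, List.head?_cons] at hb ⊢
      exact hb
  · have h2 := (List.pairwise_append.mp hpw).2.1
    exact (List.pairwise_cons.mp h2).1 y (by simp)

lemma move_core (hCL : IsCLLabeling lab) {n n' : MaxChain P} {a c b : List P} {x w y : P}
    (hn : n.elems = a ++ x :: (c ++ y :: b))
    (hn' : n'.elems = a ++ x :: w :: y :: b)
    (hc : c ≠ []) (hw : w ∉ c)
    (hasc : RestrAscending lab n a.length (a.length + c.length + 1))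
    (hdesc : ¬ lab n' a.length ≤ lab n' (a.length + 1)) :
    (∀ j, j < a.length → lab n j = lab n' j) ∧ lab n a.length < lab n' a.length := by
  obtain ⟨c0, ct, rfl⟩ : ∃ c0 ct, c = c0 :: ct := by
    cases c with
    | nil => exact absurd rfl hc
    | cons c0 ct => exact ⟨c0, ct, rfl⟩
  obtain ⟨A1, A2, A3, A4, A5, A6⟩ := anat hn
  have hn'' : n'.elems = a ++ x :: ([w] ++ y :: b) := by
    simp only [List.singleton_append]; exact hn'
  obtain ⟨B1, B2, B3, B4, B5, B6⟩ := anat hn''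
  have hagree : ∀ j, j < a.length → lab n j = lab n' j := by
    intro j hj
    exact hCL.1 n n' a.length (A1.trans B1.symm) j hj
  refine ⟨hagree, ?_⟩
  obtain ⟨-, -, hlex⟩ := hCL.2 (a ++ [x]) x y A5 A6
  have hrootlen : (a ++ [x]).length - 1 = a.length := by simp
  have hne : restrictChain n (a ++ [x]) y ≠ restrictChain n' (a ++ [x]) y := by
    rw [A3, B3]
    intro hh
    have h2 : (c0 :: ct) ++ [y] = [w] ++ [y] := by
      simpa using hh
    have h3 : c0 :: ct = [w] := List.append_inj_left' h2 rfl
    exact hw (by simp [h3])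
  have hL := hlex n n' A4 B4 (by rw [hrootlen, A2]; exact hasc) hne
  rw [hrootlen] at hL
  have A2' : n.elems.idxOf y = a.length + (ct.length + 2) := by
    rw [A2, List.length_cons]; omega
  have B2' : n'.elems.idxOf y = a.length + 2 := by
    rw [B2, List.length_singleton]
  rw [A2', B2'] at hL
  simp only [restrLabels, Nat.add_sub_cancel_left] at hL
  rw [map_range_two_cons] at hL
  have e2 : (List.range 2).map (fun k => lab n' (a.length + k))
      = [lab n' a.length, lab n' (a.length + 1)] := by
    rw [show List.range 2 = [0, 1] by decide]
    simp
  rw [e2] at hL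
  simp only [Nat.add_zero] at hL
  have hasc0 : lab n a.length ≤ lab n (a.length + 1) :=
    hasc a.length le_rfl (by rw [List.length_cons]; omega)
  exact lex_two' hasc0 hdesc hL

/-- The full label word of a maximal chain. -/
def chainWord (lab : MaxChain P → ℕ → Λ) (n : MaxChain P) : List Λ :=
  (List.range (n.elems.length - 1)).map (lab n)

lemma move_word (hCL : IsCLLabeling lab) {n n' : MaxChain P} (h : PolygonMove lab n n') :
    List.Lex (· < ·) (chainWord lab n) (chainWord lab n') := by
  obtain ⟨a, c, b, x, w, y, hn, hn', hc, hw, hasc, hdesc⟩ := h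
  obtain ⟨hagree, hlt⟩ := move_core hCL hn hn' hc hw hasc hdesc
  exact lex_of_agree_lt a.length _ _ _ _
    (by rw [hn]; simp only [List.length_append, List.length_cons, List.length_nil]; omega)
    (by rw [hn']; simp only [List.length_append, List.length_cons, List.length_nil]; omega)
    hagree hlt

lemma cdle_word (hCL : IsCLLabeling lab) {n n' : MaxChain P} (h : CDLe lab n n') :
    n = n' ∨ List.Lex (· < ·) (chainWord lab n) (chainWord lab n') := by
  induction h with
  | refl => exact Or.inl rfl
  | tail _ hstep ih =>
    right
    rcases ih with rfl | ih
    · exact move_word hCL hstep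
    · exact lex_trans' ih (move_word hCL hstep)

end Aux11

/-- if `m` increases by a polygon move to `m'` and the unique new
element `x` of `m'` is a coatom (`x ⋖ ⊤`), then `m'` covers `m` in the maximal
chain descent order. -/
theorem statement11 [Fintype P] (lab : MaxChain P → ℕ → Λ) (hCL : IsCLLabeling lab)
    (m m' : MaxChain P) (x : P) (hmove : PolygonMove lab m m')
    (hdiff : m'.elems.toFinset \ m.elems.toFinset = {x})
    (hx : x ⋖ (⊤ : P)) :
    CDCovBy lab m m' := by
  obtain ⟨a, c, b, x0, w, y, hm, hm', hc, hw, hasc, hdesc⟩ := hmove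
  -- the new element is `w`
  have hxw : x = w := by
    have hmem : x ∈ m'.elems.toFinset \ m.elems.toFinset := by
      rw [hdiff]; exact Finset.mem_singleton_self x
    rw [Finset.mem_sdiff, List.mem_toFinset, List.mem_toFinset, hm, hm'] at hmem
    obtain ⟨h1, h2⟩ := hmem
    simp only [List.mem_append, List.mem_cons] at h1 h2
    tauto
  subst hxw
  -- the top of the polygon is `⊤` and nothing lies above it
  have hch' := m'.chain'
  rw [hm'] at hch'
  have hxy : x ⋖ y := chain'_middle (a ++ [x0]) (by simpa using hch')
  have hy : y = ⊤ := by
    by_contra hne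
    exact hx.2 hxy.lt (lt_of_le_of_ne le_top hne)
  subst hy
  have hb : b = [] := by
    cases b with
    | nil => rfl
    | cons z t =>
      have hz : (⊤ : P) ⋖ z := chain'_middle (a ++ [x0, x]) (by simpa using hch')
      exact absurd hz.lt not_top_lt
  subst hb
  have hmove' : PolygonMove lab m m' :=
    ⟨a, c, [], x0, x, ⊤, hm, hm', hc, hw, hasc, hdesc⟩
  have hlex_mm' := move_word hCL hmove'
  refine ⟨⟨Relation.ReflTransGen.single hmove', ?_⟩, ?_⟩
  · intro he
    rw [he] at hlex_mm'
    exact lex_irrefl' _ hlex_mm'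
  · rintro z ⟨hmz, hmzne⟩ ⟨hzm', hzm'ne⟩
    rcases Relation.ReflTransGen.cases_tail hzm' with heq | ⟨p, hzp, hpm'⟩
    · exact hzm'ne heq.symm
    obtain ⟨a', c', b'', u, w', v, hp, hm'2, hc', hw', hasc', hdesc'⟩ := hpm'
    have hcore := move_core hCL hp hm'2 hc' hw' hasc' hdesc'
    have hlen0 := congrArg List.length (hm'2.symm.trans hm')
    simp only [List.length_append, List.length_cons, List.length_nil] at hlen0
    by_cases hcase : a'.length < a.length
    · -- the last move happens strictly below the polygon: `word p < word m`
      have htm : m.elems.take (a.length + 1) = m'.elems.take (a.length + 1) :=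
        (take_eq_root hm).trans (take_eq_root hm').symm
      have hlab_m : ∀ j, j < a.length → lab m j = lab m' j := fun j hj =>
        hCL.1 m m' a.length htm j hj
      have hplex : List.Lex (· < ·) (chainWord lab p) (chainWord lab m) :=
        lex_of_agree_lt a'.length _ _ _ _
          (by rw [hp]; simp only [List.length_append, List.length_cons, List.length_nil]; omega)
          (by rw [hm]; simp only [List.length_append, List.length_cons, List.length_nil]; omega)
          (fun j hj => (hcore.1 j hj).trans (hlab_m j (hj.trans hcase)).symm)
          (lt_of_lt_of_eq hcore.2 (hlab_m a'.length hcase).symm)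
      have hmp : CDLe lab m p := hmz.trans hzp
      rcases cdle_word hCL hmp with rfl | hmplex
      · exact lex_irrefl' _ hplex
      · exact lex_irrefl' _ (lex_trans' hmplex hplex)
    · -- the last move is the top polygon move, so `p = m` by CL-uniqueness
      have hEq : a'.length = a.length := by omega
      have hb'' : b'' = [] := List.length_eq_zero_iff.mp (by omega)
      subst hb''
      have hl : a' ++ [u, w', v] = a ++ [x0, x, ⊤] := hm'2.symm.trans hm'
      obtain ⟨ha, ht⟩ := List.append_inj hl hEq
      subst ha
      have ht0 : u = x0 ∧ w' = x ∧ v = ⊤ := by simpa using ht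
      obtain ⟨h1, h2, h3⟩ := ht0
      obtain ⟨rfl, rfl, rfl⟩ : x0 = u ∧ x = w' ∧ (⊤ : P) = v :=
        ⟨h1.symm, h2.symm, h3.symm⟩
      obtain ⟨A1, A2, A3, A4, A5, A6⟩ := anat hm
      obtain ⟨B1, B2, B3, B4, B5, B6⟩ := anat hp
      obtain ⟨-, huniq, -⟩ := hCL.2 (a' ++ [x0]) x0 ⊤ A5 A6
      have hrootlen : (a' ++ [x0]).length - 1 = a'.length := by simp
      have hres : restrictChain p (a' ++ [x0]) ⊤ = restrictChain m (a' ++ [x0]) ⊤ :=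
        huniq p m B4 A4 (by rw [hrootlen, B2]; exact hasc')
          (by rw [hrootlen, A2]; exact hasc)
      rw [A3, B3] at hres
      have h2 : c' ++ [(⊤ : P)] = c ++ [(⊤ : P)] := by simpa using hres
      have hcc : c' = c := List.append_inj_left' h2 rfl
      have hpm : p = m := MaxChain.ext'_s11 (by rw [hp, hm, hcc])
      rcases cdle_word hCL hmz with rfl | h1
      · exact hmzne rfl
      · rcases cdle_word hCL hzp with heq2 | h2
        · rw [heq2, hpm] at h1
          exact lex_irrefl' _ h1
        · rw [hpm] at h2
          exact lex_irrefl' _ (lex_trans' h1 h2)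
end

section
/- Let P be a finite bounded poset all of whose maximal chains have length n, and let λ be an Sₙ EL-labeling of P, i.e. an EL-labeling with integer labels such that the label sequence of every maximal chain of P is a permutation of {1,…,n}. Then λ is polygon strong, and hence λ is polygon complete. -/
variable {P : Type*} [PartialOrder P] [BoundedOrder P]
variable {Λ : Type*} [PartialOrder Λ]

namespace Statement13Aux

/-- Number of inversions of a list of naturals. -/
def inv : List ℕ → ℕ
  | [] => 0
  | a :: t => t.countP (fun b => decide (b < a)) + inv t

lemma inv_append_swap (a b : ℕ) (hab : a < b) (l1 l2 : List ℕ) :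
    inv (l1 ++ b :: a :: l2) = inv (l1 ++ a :: b :: l2) + 1 := by
  induction l1 with
  | nil =>
      simp only [List.nil_append, inv, List.countP_cons]
      have h1 : ¬ b < a := not_lt.2 hab.le
      simp [hab, h1]
      omega
  | cons q l1 ih =>
      simp only [List.cons_append, inv, List.append_eq]
      have hcount : (l1 ++ b :: a :: l2).countP (fun s => decide (s < q))
          = (l1 ++ a :: b :: l2).countP (fun s => decide (s < q)) := by
        simp only [List.countP_append, List.countP_cons]
        omega
      omega

variable {P : Type*} [PartialOrder P] [BoundedOrder P]

lemma labelSeq_cons₂ (lab : P → P → ℕ) (a b : P) (t : List P) :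
    labelSeq lab (a :: b :: t) = lab a b :: labelSeq lab (b :: t) := rfl

lemma labelSeq_append (lab : P → P → ℕ) :
    ∀ (l : List P) (p : P) (t : List P), l.getLast? = some p →
    labelSeq lab (l ++ t) = labelSeq lab l ++ labelSeq lab (p :: t)
  | [], p, t, h => by simp at h
  | [q], p, t, h => by
      simp only [List.getLast?_singleton, Option.some.injEq] at h
      subst h
      simp [labelSeq]
  | q :: r :: l, p, t, h => by
      have h' : (r :: l).getLast? = some p := by
        rwa [List.getLast?_cons_cons] at h
      have ih := labelSeq_append lab (r :: l) p t h'
      have : (q :: r :: l) ++ t = q :: r :: (l ++ t) := by simp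
      rw [this, labelSeq_cons₂, show r :: (l ++ t) = (r :: l) ++ t from rfl, ih,
        labelSeq_cons₂]
      simp

lemma labelSeq_join (lab : P → P → ℕ) {c1 c2 : List P} {p : P}
    (h1 : c1.getLast? = some p) (h2 : c2.head? = some p) :
    labelSeq lab (c1 ++ c2.tail) = labelSeq lab c1 ++ labelSeq lab c2 := by
  obtain ⟨t, rfl⟩ : ∃ t, c2 = p :: t := by
    cases c2 with
    | nil => simp at h2
    | cons a t => simp only [List.head?_cons, Option.some.injEq] at h2; exact ⟨t, by rw [h2]⟩
  exact labelSeq_append lab c1 p t h1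

lemma isSatChain_singleton (x : P) : IsSatChain [x] x x :=
  ⟨List.isChain_singleton x, rfl, rfl⟩

lemma satChain_join {c1 c2 : List P} {u p w : P}
    (h1 : IsSatChain c1 u p) (h2 : IsSatChain c2 p w) :
    IsSatChain (c1 ++ c2.tail) u w := by
  obtain ⟨hc1, hh1, hl1⟩ := h1
  obtain ⟨hc2, hh2, hl2⟩ := h2
  obtain ⟨t, rfl⟩ : ∃ t, c2 = p :: t := by
    cases c2 with
    | nil => simp at hh2
    | cons a t => simp only [List.head?_cons, Option.some.injEq] at hh2; exact ⟨t, by rw [hh2]⟩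
  refine ⟨?_, ?_, ?_⟩
  · show List.IsChain _ _
    rw [List.isChain_append]
    refine ⟨hc1, (List.isChain_cons.mp hc2).2, ?_⟩
    intro a ha b hb
    rw [hl1] at ha
    simp only [Option.mem_def, Option.some.injEq] at ha
    subst ha
    exact (List.isChain_cons.mp hc2).1 b hb
  · cases c1 with
    | nil => simp at hh1
    | cons a c1' => simpa using hh1
  · simp only [List.tail_cons] at *
    cases t with
    | nil =>
        simp only [List.append_nil]
        rw [hl1]
        simpa using hl2
    | cons b t' =>
        rw [List.getLast?_append]
        rw [List.getLast?_cons_cons] at hl2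
        rw [hl2]
        rfl

attribute [local instance] Classical.propDecidable

lemma exists_satChain_aux [Fintype P] :
    ∀ (N : ℕ) (u v : P), u ≤ v →
      (Finset.univ.filter fun s => u < s ∧ s ≤ v).card ≤ N → ∃ c, IsSatChain c u v := by
  classical
  intro N
  induction N with
  | zero =>
      intro u v huv hcard
      have huv' : u = v := by
        by_contra hne
        have hv : v ∈ Finset.univ.filter fun s => u < s ∧ s ≤ v := by
          simp [lt_of_le_of_ne huv hne]
        have := Finset.card_pos.mpr ⟨v, hv⟩
        omega
      subst huv'
      exact ⟨[u], isSatChain_singleton u⟩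
  | succ N ih =>
      intro u v huv hcard
      rcases eq_or_lt_of_le huv with rfl | hlt
      · exact ⟨[u], isSatChain_singleton u⟩
      · have hvS : v ∈ Finset.univ.filter fun s => u < s ∧ s ≤ v := by simp [hlt]
        obtain ⟨t, htS, htmin⟩ :=
          (Finset.univ.filter fun s => u < s ∧ s ≤ v).exists_minimal ⟨v, hvS⟩
        have htS' : u < t ∧ t ≤ v := by simpa using htS
        have hcov : u ⋖ t := by
          refine ⟨htS'.1, fun s hs hst => ?_⟩
          exact hst.not_ge (htmin (by simp [hs, hst.le.trans htS'.2]) hst.le)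
        have hsub : (Finset.univ.filter fun s => t < s ∧ s ≤ v)
            ⊆ (Finset.univ.filter fun s => u < s ∧ s ≤ v).erase t := by
          intro s hs
          simp only [Finset.mem_filter, Finset.mem_univ, true_and] at hs
          exact Finset.mem_erase.mpr ⟨hs.1.ne', by simp [htS'.1.trans hs.1, hs.2]⟩
        have hcard' : (Finset.univ.filter fun s => t < s ∧ s ≤ v).card ≤ N := by
          have hle := Finset.card_le_card hsub
          have heq := Finset.card_erase_of_mem htS
          have hpos := Finset.card_pos.mpr ⟨t, htS⟩
          omega
        obtain ⟨c, hc⟩ := ih t v htS'.2 hcard'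
        obtain ⟨a, ct, rfl⟩ : ∃ a ct, c = a :: ct := by
          cases c with
          | nil => exact absurd hc.2.1 (by simp)
          | cons a ct => exact ⟨a, ct, rfl⟩
        have hat : a = t := by simpa using hc.2.1
        subst hat
        refine ⟨u :: a :: ct, ?_, rfl, ?_⟩
        · exact List.isChain_cons_cons.mpr ⟨hcov, hc.1⟩
        · rw [List.getLast?_cons_cons]
          exact hc.2.2

lemma exists_satChain [Fintype P] (u v : P) (huv : u ≤ v) : ∃ c, IsSatChain c u v :=
  exists_satChain_aux _ u v huv le_rfl

lemma pair_perm {α : Type*} {a b c d : α} (h : List.Perm [a, b] [c, d]) :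
    (a = c ∧ b = d) ∨ (a = d ∧ b = c) := by
  have ha : a ∈ [c, d] := h.mem_iff.mp (by simp)
  simp only [List.mem_cons, List.mem_singleton, List.not_mem_nil, or_false] at ha
  rcases ha with rfl | rfl
  · left
    refine ⟨rfl, ?_⟩
    have h2 := h.cons_inv
    simpa using h2.mem_iff.mp (by simp)
  · right
    refine ⟨rfl, ?_⟩
    have h2 : List.Perm [a, b] [a, c] := h.trans (List.Perm.swap a c [])
    simpa using h2.cons_inv.mem_iff.mp (by simp)

lemma move_swap [Fintype P] (lab : P → P → ℕ) (n : ℕ)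
    (hlen : ∀ m : MaxChain P, m.elems.length = n + 1)
    (hperm : ∀ m : MaxChain P, List.Perm (labelSeq lab m.elems) (List.range' 1 n))
    {m m' : MaxChain P} (h : ELPolygonMove lab m m') :
    ∃ (L1 L2 : List ℕ) (a b : ℕ), a < b ∧
      labelSeq lab m.elems = L1 ++ a :: b :: L2 ∧
      labelSeq lab m'.elems = L1 ++ b :: a :: L2 := by
  obtain ⟨aL, c, bL, x, w, y, hm, hm', hcne, -, hasc, hdesc⟩ := h
  have h1 := hlen m
  have h2 := hlen m'
  rw [hm] at h1
  rw [hm'] at h2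
  simp only [List.length_append, List.length_cons] at h1 h2
  have hclen : c.length = 1 := by omega
  obtain ⟨v, rfl⟩ := List.length_eq_one_iff.mp hclen
  have hm2 : m.elems = (aL ++ [x]) ++ (v :: y :: bL) := by rw [hm]; simp
  have hm'2 : m'.elems = (aL ++ [x]) ++ (w :: y :: bL) := by rw [hm']; simp
  have hlabm : labelSeq lab m.elems
      = labelSeq lab (aL ++ [x]) ++ (lab x v :: lab v y :: labelSeq lab (y :: bL)) := by
    rw [hm2, labelSeq_append lab (aL ++ [x]) x _ List.getLast?_concat]
    rfl
  have hlabm' : labelSeq lab m'.elems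
      = labelSeq lab (aL ++ [x]) ++ (lab x w :: lab w y :: labelSeq lab (y :: bL)) := by
    rw [hm'2, labelSeq_append lab (aL ++ [x]) x _ List.getLast?_concat]
    rfl
  have hpp : List.Perm [lab x v, lab v y] [lab x w, lab w y] := by
    have hperm' : List.Perm (labelSeq lab m.elems) (labelSeq lab m'.elems) :=
      (hperm m).trans (hperm m').symm
    rw [hlabm, hlabm'] at hperm'
    rw [show lab x v :: lab v y :: labelSeq lab (y :: bL)
          = [lab x v, lab v y] ++ labelSeq lab (y :: bL) from rfl,
        show lab x w :: lab w y :: labelSeq lab (y :: bL)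
          = [lab x w, lab w y] ++ labelSeq lab (y :: bL) from rfl] at hperm'
    exact (List.perm_append_right_iff _).mp ((List.perm_append_left_iff _).mp hperm')
  have hascvy : lab x v ≤ lab v y := by
    have : AscLabels lab [x, v, y] := by simpa using hasc
    simpa [AscLabels, labelSeq, List.Chain'] using this
  have hdesc' : lab w y < lab x w := not_le.mp hdesc
  rcases pair_perm hpp with ⟨e1, e2⟩ | ⟨e1, e2⟩
  · exact absurd (e1 ▸ e2 ▸ hascvy) (not_le.mpr hdesc')
  · refine ⟨labelSeq lab (aL ++ [x]), labelSeq lab (y :: bL), lab x v, lab v y,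
      ?_, hlabm, ?_⟩
    · omega
    · rw [hlabm', ← e1, ← e2]

lemma move_inv [Fintype P] (lab : P → P → ℕ) (n : ℕ)
    (hlen : ∀ m : MaxChain P, m.elems.length = n + 1)
    (hperm : ∀ m : MaxChain P, List.Perm (labelSeq lab m.elems) (List.range' 1 n))
    {m m' : MaxChain P} (h : ELPolygonMove lab m m') :
    inv (labelSeq lab m'.elems) = inv (labelSeq lab m.elems) + 1 := by
  obtain ⟨L1, L2, a, b, hab, h1, h2⟩ := move_swap lab n hlen hperm h
  rw [h1, h2]
  exact inv_append_swap a b hab L1 L2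

lemma le_inv [Fintype P] (lab : P → P → ℕ) (n : ℕ)
    (hlen : ∀ m : MaxChain P, m.elems.length = n + 1)
    (hperm : ∀ m : MaxChain P, List.Perm (labelSeq lab m.elems) (List.range' 1 n))
    {m m' : MaxChain P} (h : ELCDLe lab m m') :
    inv (labelSeq lab m.elems) ≤ inv (labelSeq lab m'.elems) := by
  induction h with
  | refl => exact le_rfl
  | tail hstep hmove ih =>
      have := move_inv lab n hlen hperm hmove
      omega

lemma lt_inv [Fintype P] (lab : P → P → ℕ) (n : ℕ)
    (hlen : ∀ m : MaxChain P, m.elems.length = n + 1)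
    (hperm : ∀ m : MaxChain P, List.Perm (labelSeq lab m.elems) (List.range' 1 n))
    {m m' : MaxChain P} (h : ELCDLt lab m m') :
    inv (labelSeq lab m.elems) < inv (labelSeq lab m'.elems) := by
  obtain ⟨hle, hne⟩ := h
  rcases hle.cases_head with rfl | ⟨z, hz, hz'⟩
  · exact absurd rfl hne
  · have h1 := move_inv lab n hlen hperm hz
    have h2 := le_inv lab n hlen hperm hz'
    omega

end Statement13Aux


/-- an `Sₙ` EL-labeling (an integer-valued EL-labeling of a poset
all of whose maximal chains have length `n`, such that the label sequence of
every maximal chain is a permutation of `{1,…,n}`) is polygon strong, and hence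
polygon complete. -/
theorem statement13 [Fintype P] (lab : P → P → ℕ) (n : ℕ)
    (hEL : IsELLabeling lab)
    (hlen : ∀ m : MaxChain P, m.elems.length = n + 1)
    (hperm : ∀ m : MaxChain P, List.Perm (labelSeq lab m.elems) (List.range' 1 n)) :
    PolygonStrong lab ∧ ELPolygonComplete lab := by
  classical
  constructor
  · -- Polygon strong
    intro x y z y' hxy hyz hdesc c hc hasc hsuf
    obtain ⟨d, hd⟩ := Statement13Aux.exists_satChain (⊥ : P) x bot_le
    obtain ⟨e, he⟩ := Statement13Aux.exists_satChain z (⊤ : P) le_top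
    have hmid1 : IsSatChain [x, y, z] x z :=
      ⟨by simp [List.Chain', List.isChain_cons_cons, hxy, hyz], rfl, by simp⟩
    obtain ⟨ct, rfl⟩ : ∃ ct, c = x :: ct := by
      cases c with
      | nil => exact absurd hc.2.1 (by simp)
      | cons a ct =>
          have hax : a = x := by simpa using hc.2.1
          exact ⟨ct, by rw [hax]⟩
    have hM1 : IsSatChain (d ++ ([y, z] ++ e.tail)) ⊥ ⊤ :=
      Statement13Aux.satChain_join hd (Statement13Aux.satChain_join hmid1 he)
    have hM2 : IsSatChain (d ++ (ct ++ e.tail)) ⊥ ⊤ :=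
      Statement13Aux.satChain_join hd (Statement13Aux.satChain_join hc he)
    have hl1 : (d ++ ([y, z] ++ e.tail)).length = n + 1 :=
      hlen ⟨_, hM1.1, hM1.2.1, hM1.2.2⟩
    have hl2 : (d ++ (ct ++ e.tail)).length = n + 1 :=
      hlen ⟨_, hM2.1, hM2.2.1, hM2.2.2⟩
    have hct : ct.length = 2 := by
      simp only [List.length_append, List.length_cons, List.length_nil] at hl1 hl2
      omega
    -- deduce ct = [y', z]
    obtain ⟨s, hs⟩ := hsuf
    have hslen : s.length = 1 := by
      have hlens := congrArg List.length hs
      simp only [List.length_append, List.length_cons, List.length_nil, hct] at hlens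
      omega
    obtain ⟨s0, rfl⟩ := List.length_eq_one_iff.mp hslen
    have hs' : s0 = x ∧ [y', z] = ct := by
      simpa only [List.singleton_append, List.cons.injEq] using hs
    obtain ⟨rfl, hct2⟩ := hs'
    subst hct2
    -- label sequences of the two maximal chains
    have l1 : labelSeq lab (d ++ ([y, z] ++ e.tail))
        = labelSeq lab d ++ ([lab s0 y, lab y z] ++ labelSeq lab e) := by
      have inner := Statement13Aux.labelSeq_join lab
        (show ([s0, y, z] : List P).getLast? = some z by simp) he.2.1
      have outer := Statement13Aux.labelSeq_join lab hd.2.2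
        (show ([s0, y, z] ++ e.tail).head? = some s0 from rfl)
      calc labelSeq lab (d ++ ([y, z] ++ e.tail))
          = labelSeq lab d ++ labelSeq lab ([s0, y, z] ++ e.tail) := outer
        _ = labelSeq lab d ++ (labelSeq lab [s0, y, z] ++ labelSeq lab e) := by rw [inner]
        _ = labelSeq lab d ++ ([lab s0 y, lab y z] ++ labelSeq lab e) := rfl
    have l2 : labelSeq lab (d ++ ([y', z] ++ e.tail))
        = labelSeq lab d ++ ([lab s0 y', lab y' z] ++ labelSeq lab e) := by
      have inner := Statement13Aux.labelSeq_join lab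
        (show ([s0, y', z] : List P).getLast? = some z by simp) he.2.1
      have outer := Statement13Aux.labelSeq_join lab hd.2.2
        (show ([s0, y', z] ++ e.tail).head? = some s0 from rfl)
      calc labelSeq lab (d ++ ([y', z] ++ e.tail))
          = labelSeq lab d ++ labelSeq lab ([s0, y', z] ++ e.tail) := outer
        _ = labelSeq lab d ++ (labelSeq lab [s0, y', z] ++ labelSeq lab e) := by rw [inner]
        _ = labelSeq lab d ++ ([lab s0 y', lab y' z] ++ labelSeq lab e) := rfl
    have hp1 : List.Perm (labelSeq lab (d ++ ([y, z] ++ e.tail))) (List.range' 1 n) :=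
      hperm ⟨_, hM1.1, hM1.2.1, hM1.2.2⟩
    have hp2 : List.Perm (labelSeq lab (d ++ ([y', z] ++ e.tail))) (List.range' 1 n) :=
      hperm ⟨_, hM2.1, hM2.2.1, hM2.2.2⟩
    have hpp : List.Perm [lab s0 y, lab y z] [lab s0 y', lab y' z] := by
      have hperm' := hp1.trans hp2.symm
      rw [l1, l2] at hperm'
      exact (List.perm_append_right_iff _).mp ((List.perm_append_left_iff _).mp hperm')
    have hascy' : lab s0 y' ≤ lab y' z := by
      simpa [AscLabels, labelSeq, List.Chain'] using hasc
    have hd' : lab y z < lab s0 y := not_le.mp hdesc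
    rcases Statement13Aux.pair_perm hpp with ⟨e1, e2⟩ | ⟨e1, e2⟩
    · exact absurd (e1 ▸ e2 ▸ hascy') (not_le.mpr hd')
    · omega
  · -- Polygon complete
    intro m m' h
    have hinv := Statement13Aux.move_inv lab n hlen hperm h
    have hne : m ≠ m' := by
      rintro rfl
      omega
    refine ⟨⟨Relation.ReflTransGen.single h, hne⟩, ?_⟩
    intro z hz hz'
    have h1 := Statement13Aux.lt_inv lab n hlen hperm hz
    have h2 := Statement13Aux.lt_inv lab n hlen hperm hz'
    omega
end

section
/- Let L be a finite geometric lattice, i.e. a finite lattice that is atomistic (every element is a join of atoms) and upper semimodular (for all a, b in L, if a ∧ b ⋖ b then a ⋖ a ∨ b). Fix a linear order Ω on the set of atoms of L, and let λ_Ω be the minimal labeling of L: for each cover x ⋖ y, λ_Ω(x,y) is the Ω-least atom a with a ≤ y and a ≰ x, with labels compared via Ω. Assume λ_Ω is an EL-labeling of L. Then λ_Ω is polygon strong, and hence λ_Ω is polygon complete. -/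
variable {P : Type*} [PartialOrder P] [BoundedOrder P]
variable {Λ : Type*} [PartialOrder Λ]

set_option linter.unusedSectionVars false

section ListAux

lemma labelSeq_cons_cons_s14 (lab : P → P → Λ) (a b : P) (l : List P) :
    labelSeq lab (a :: b :: l) = lab a b :: labelSeq lab (b :: l) := rfl

lemma labelSeq_cons (lab : P → P → Λ) (h : P) (l : List P) :
    labelSeq lab (h :: l) = (l.head?.map (lab h)).toList ++ labelSeq lab l := by
  cases l <;> rfl

lemma head?_append_pair {α : Type*} (u : List α) (w : α) (t : List α) :
    (u ++ w :: t).head? = (u ++ [w]).head? := by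
  cases u <;> simp

lemma labelSeq_append (lab : P → P → Λ) (w : P) (t : List P) :
    ∀ u : List P, labelSeq lab (u ++ w :: t) = labelSeq lab (u ++ [w]) ++ labelSeq lab (w :: t)
  | [] => by simp [labelSeq]
  | h :: u => by
    rw [List.cons_append, List.cons_append, labelSeq_cons, labelSeq_cons,
      labelSeq_append lab w t u, head?_append_pair]
    simp

lemma labelSeq_length (lab : P → P → Λ) (l : List P) :
    (labelSeq lab l).length = l.length - 1 := by
  simp [labelSeq]

lemma labelSeq_decomp (lab : P → P → Λ) (a : List P) (x v y : P) (b : List P) :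
    labelSeq lab (a ++ x :: v :: y :: b) =
      labelSeq lab (a ++ [x]) ++ lab x v :: lab v y :: labelSeq lab (y :: b) := by
  rw [labelSeq_append lab x (v :: y :: b) a, labelSeq_cons_cons_s14, labelSeq_cons_cons_s14]

end ListAux

theorem polygonStrong_of_minimal {L : Type*} [Lattice L] [BoundedOrder L]
    (ω : L → ℕ) (hω : ∀ a b : L, IsAtom a → IsAtom b → ω a = ω b → a = b)
    (lab : L → L → ℕ)
    (hlab : ∀ x y : L, x ⋖ y →
        IsLeast (ω '' {a : L | IsAtom a ∧ a ≤ y ∧ ¬ a ≤ x}) (lab x y)) :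
    PolygonStrong lab := by
  intro x y z y' hxy hyz hd c hsat hasc hsuf
  obtain ⟨hcchain, hhead, hlast⟩ := hsat
  obtain ⟨t, rfl⟩ := hsuf
  have hy'z : y' ⋖ z := by
    have h := hcchain.suffix (l₁ := [y', z]) ⟨t, rfl⟩
    exact List.isChain_pair.mp h
  have hdlt : lab y z < lab x y := not_le.mp hd
  by_contra hcon
  push_neg at hcon
  have main : ∀ c₁ : L, x ⋖ c₁ → c₁ ≤ y' → lab x c₁ ≤ lab y' z → False := by
    intro c₁ hxc hcy hlabs
    obtain ⟨b, ⟨hbatom, hbz, hby'⟩, hb⟩ := (hlab y' z hy'z).1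
    obtain ⟨a₁, ⟨haatom, hac, hax⟩, ha⟩ := (hlab x c₁ hxc).1
    by_cases hay : a₁ ≤ y
    · have hxya : lab x y ≤ ω a₁ := (hlab x y hxy).2 ⟨a₁, ⟨haatom, hay, hax⟩, rfl⟩
      omega
    · have haz : a₁ ≤ z := le_trans hac (le_trans hcy hy'z.le)
      have h1 : lab y z ≤ ω a₁ := (hlab y z hyz).2 ⟨a₁, ⟨haatom, haz, hay⟩, rfl⟩
      have heq : ω a₁ = ω b := by omega
      have hab : a₁ = b := hω _ _ haatom hbatom heq
      exact hby' (hab ▸ (le_trans hac hcy))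
  cases t with
  | nil =>
    simp at hhead
    subst hhead
    exact hy'z.2 hxy.lt hyz.lt
  | cons h t' =>
    have hhx : x = h := by symm; simpa using hhead
    subst hhx
    cases t' with
    | nil =>
      have hxy' : x ⋖ y' := by
        have h2 := hcchain
        simp only [List.cons_append, List.nil_append] at h2
        exact (List.isChain_cons_cons.mp h2).1
      have hasc' : lab x y' ≤ lab y' z := by
        have h2 := hasc
        simp only [AscLabels, List.cons_append, List.nil_append] at h2
        rw [labelSeq_cons_cons_s14] at h2
        exact (List.isChain_cons_cons.mp h2).1
      exact main y' hxy' le_rfl hasc'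
    | cons c₁ v =>
      simp only [List.cons_append] at hcchain hasc hhead hlast
      have hxc : x ⋖ c₁ := (List.isChain_cons_cons.mp hcchain).1
      have hpl : (x :: c₁ :: (v ++ [y', z])).Pairwise (· < ·) :=
        List.isChain_iff_pairwise.mp (List.IsChain.imp (fun _ _ hcv => hcv.lt) hcchain)
      have hcy : c₁ ≤ y' := by
        have h2 := (List.pairwise_cons.mp ((List.pairwise_cons.mp hpl).2)).1
        exact (h2 y' (by simp)).le
      have hlabs : lab x c₁ ≤ lab y' z := by
        have hasc2 : (labelSeq lab (x :: c₁ :: (v ++ [y', z]))).Pairwise (· ≤ ·) :=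
          List.isChain_iff_pairwise.mp hasc
        rw [labelSeq_cons_cons_s14] at hasc2
        have hmem : lab y' z ∈ labelSeq lab (c₁ :: (v ++ [y', z])) := by
          have he : c₁ :: (v ++ [y', z]) = (c₁ :: v) ++ y' :: [z] := by simp
          rw [he, labelSeq_append]
          simp [labelSeq]
        exact (List.pairwise_cons.mp hasc2).1 _ hmem
      exact main c₁ hxc hcy hlabs

section LexAux

/-- Auxiliary strict lexicographic comparison on `List ℕ` via `getD`. -/
def LexLt (A B : List ℕ) : Prop :=
  ∃ q, (∀ j, j < q → A.getD j 0 = B.getD j 0) ∧ A.getD q 0 < B.getD q 0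

/-- Auxiliary reverse comparison on `List ℕ` via `getD`. -/
def RevLt (A B : List ℕ) : Prop :=
  ∃ q, (∀ j, q < j → A.getD j 0 = B.getD j 0) ∧ B.getD q 0 < A.getD q 0

lemma LexLt.trans {A B C : List ℕ} (h1 : LexLt A B) (h2 : LexLt B C) : LexLt A C := by
  obtain ⟨p, hp, hp'⟩ := h1
  obtain ⟨q, hq, hq'⟩ := h2
  rcases lt_trichotomy p q with h | rfl | h
  · exact ⟨p, fun j hj => (hp j hj).trans (hq j (hj.trans h)),
      by rw [← hq p h]; exact hp'⟩
  · exact ⟨p, fun j hj => (hp j hj).trans (hq j hj), hp'.trans hq'⟩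
  · exact ⟨q, fun j hj => (hp j (hj.trans h)).trans (hq j hj),
      by rw [hp q h]; exact hq'⟩

lemma RevLt.trans {A B C : List ℕ} (h1 : RevLt A B) (h2 : RevLt B C) : RevLt A C := by
  obtain ⟨p, hp, hp'⟩ := h1
  obtain ⟨q, hq, hq'⟩ := h2
  rcases lt_trichotomy p q with h | rfl | h
  · exact ⟨q, fun j hj => (hp j (h.trans hj)).trans (hq j hj),
      by rw [hp q h]; exact hq'⟩
  · exact ⟨p, fun j hj => (hp j hj).trans (hq j hj), hq'.trans hp'⟩
  · exact ⟨p, fun j hj => (hp j hj).trans (hq j (h.trans hj)),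
      by rw [← hq p h]; exact hp'⟩

lemma LexLt.irrefl {A : List ℕ} (h : LexLt A A) : False := by
  obtain ⟨q, _, h'⟩ := h
  exact lt_irrefl _ h'

lemma getD_window (A : List ℕ) (α β : ℕ) (C : List ℕ) :
    ((A ++ α :: β :: C).getD A.length 0 = α) ∧
    ((A ++ α :: β :: C).getD (A.length + 1) 0 = β) ∧
    (∀ j, j < A.length → (A ++ α :: β :: C).getD j 0 = A.getD j 0) ∧
    (∀ j, A.length + 1 < j → (A ++ α :: β :: C).getD j 0 = C.getD (j - A.length - 2) 0) := by
  refine ⟨?_, ?_, ?_, ?_⟩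
  · rw [List.getD_append_right _ _ _ _ le_rfl]
    simp
  · rw [List.getD_append_right _ _ _ _ (by omega)]
    have h1 : A.length + 1 - A.length = 1 := by omega
    rw [h1]
    rfl
  · intro j hj
    exact List.getD_append _ _ _ _ hj
  · intro j hj
    rw [List.getD_append_right _ _ _ _ (by omega)]
    obtain ⟨k, rfl⟩ : ∃ k, j = A.length + 2 + k := ⟨j - A.length - 2, by omega⟩
    have h1 : A.length + 2 + k - A.length = k + 2 := by omega
    have h2 : A.length + 2 + k - A.length - 2 = k := by omega
    rw [h2, h1]
    rfl

lemma lex_pair_cases {a b c d : ℕ} (h : List.Lex (· < ·) [a, b] [c, d]) :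
    a < c ∨ (a = c ∧ b < d) := by
  cases h with
  | rel h => exact Or.inl h
  | cons h =>
    cases h with
    | rel h => exact Or.inr ⟨rfl, h⟩
    | cons h => cases h

end LexAux

section Geometric

variable {L : Type*} [Lattice L] [BoundedOrder L]

theorem diamond_move
    (hsemimod : ∀ a b : L, a ⊓ b ⋖ b → a ⋖ a ⊔ b)
    (lab : L → L → ℕ) (hEL : IsELLabeling lab) (hstrong : PolygonStrong lab)
    {m m' : MaxChain L} (hmv : ELPolygonMove lab m m') :
    ∃ (a b : List L) (x v w y : L),
      m.elems = a ++ x :: v :: y :: b ∧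
      m'.elems = a ++ x :: w :: y :: b ∧ v ≠ w ∧
      (lab x v ≤ lab v y) ∧ ¬ lab x w ≤ lab w y ∧
      lab x v < lab x w ∧ lab w y < lab v y := by
  obtain ⟨a, c, b, x, w, y, hm, hm', hcne, hwc, hasc, hdesc⟩ := hmv
  -- covers in m'
  have hxwy : List.Chain' (· ⋖ ·) [x, w, y] :=
    m'.chain'.infix ⟨a, b, by rw [hm']; simp⟩
  have hxw : x ⋖ w := (List.isChain_cons_cons.mp hxwy).1
  have hwy : w ⋖ y := List.isChain_pair.mp (List.isChain_cons_cons.mp hxwy).2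
  -- the segment of m
  obtain ⟨v, c', rfl⟩ : ∃ v c', c = v :: c' := by
    cases c with
    | nil => exact absurd rfl hcne
    | cons v c' => exact ⟨v, c', rfl⟩
  have hseg : List.Chain' (· ⋖ ·) (x :: (v :: c') ++ y :: b) :=
    m.chain'.infix ⟨a, [], by rw [hm]; simp⟩
  have hxv : x ⋖ v := (List.isChain_cons_cons.mp hseg).1
  have hpl : (x :: (v :: c') ++ y :: b).Pairwise (· < ·) :=
    List.isChain_iff_pairwise.mp (List.IsChain.imp (fun _ _ hcv => hcv.lt) hseg)
  have hvltY : v < y := by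
    have h2 := (List.pairwise_cons.mp ((List.pairwise_cons.mp hpl).2)).1
    exact h2 y (by simp)
  have hvw : v ≠ w := fun h => hwc (h ▸ (List.mem_cons_self : v ∈ v :: c'))
  -- v ⊓ w = x
  have hvwx : v ⊓ w = x := by
    have h1 : x ≤ v ⊓ w := le_inf hxv.le hxw.le
    by_contra hne
    have h3 : v ⊓ w ≠ v := by
      intro h
      have hvlew : v ≤ w := inf_eq_left.mp h
      exact hvw ((hvlew.lt_or_eq).resolve_left (hxw.2 hxv.lt))
    exact hxv.2 (h1.lt_of_ne (Ne.symm hne)) ((inf_le_left).lt_of_ne h3)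
  -- v ⋖ y via semimodularity
  have hvy : v ⋖ y := by
    have h4 : v ⊓ w ⋖ w := hvwx ▸ hxw
    have h5 : v ⋖ v ⊔ w := hsemimod v w h4
    have hwlt : w < v ⊔ w := by
      refine lt_of_le_of_ne le_sup_right ?_
      intro h
      have hvlew : v ≤ w := by rw [h]; exact le_sup_left
      exact hvw ((hvlew.lt_or_eq).resolve_left (hxw.2 hxv.lt))
    have h7 : v ⊔ w = y := by
      by_contra hne
      exact hwy.2 hwlt ((sup_le hvltY.le hwy.le).lt_of_ne hne)
    exact h7 ▸ h5
  -- c' = []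
  have hc' : c' = [] := by
    cases c' with
    | nil => rfl
    | cons v₂ c'' =>
      exfalso
      have hvv2 : v ⋖ v₂ := by
        have h2 := (List.isChain_cons_cons.mp hseg).2
        exact (List.isChain_cons_cons.mp h2).1
      have hv2y : v₂ < y := by
        have h2 := (List.pairwise_cons.mp
          ((List.pairwise_cons.mp ((List.pairwise_cons.mp hpl).2)).2)).1
        exact h2 y (by simp)
      exact hvy.2 hvv2.lt hv2y
  subst hc'
  -- now assemble everything
  have hmel : m.elems = a ++ x :: v :: y :: b := by rw [hm]; simp
  have hascvy : lab x v ≤ lab v y := by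
    have h2 := hasc
    simp only [AscLabels, List.cons_append, List.nil_append] at h2
    rw [labelSeq_cons_cons_s14] at h2
    exact (List.isChain_cons_cons.mp h2).1
  have hxy : x < y := hxv.lt.trans hvy.lt
  have hsat1 : IsSatChain [x, v, y] x y := by
    refine ⟨?_, rfl, rfl⟩
    exact List.isChain_cons_cons.mpr ⟨hxv, List.isChain_pair.mpr hvy⟩
  have hsat2 : IsSatChain [x, w, y] x y := by
    refine ⟨?_, rfl, rfl⟩
    exact List.isChain_cons_cons.mpr ⟨hxw, List.isChain_pair.mpr hwy⟩
  have hascchain : AscLabels lab [x, v, y] := by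
    simp only [AscLabels]
    rw [labelSeq_cons_cons_s14]
    exact List.isChain_cons_cons.mpr ⟨hascvy, List.isChain_singleton _⟩
  have hneq : [x, v, y] ≠ [x, w, y] := by
    intro h
    apply hvw
    simpa using h
  have hlex := (hEL x y hxy).2 [x, v, y] [x, w, y] hsat1 hsat2 hascchain hneq
  have hlex' : List.Lex (· < ·) [lab x v, lab v y] [lab x w, lab w y] := by
    have e1 : labelSeq lab [x, v, y] = [lab x v, lab v y] := rfl
    have e2 : labelSeq lab [x, w, y] = [lab x w, lab w y] := rfl
    rwa [e1, e2] at hlex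
  have hdlt : lab w y < lab x w := not_le.mp hdesc
  have hl1 : lab x v < lab x w := by
    rcases lex_pair_cases hlex' with h | ⟨heq, hlt⟩
    · exact h
    · omega
  have hl2 : lab w y < lab v y :=
    hstrong x w y v hxw hwy hdesc [x, v, y] hsat1 hascchain ⟨[x], rfl⟩
  exact ⟨a, b, x, v, w, y, hmel, hm', hvw, hascvy, hdesc, hl1, hl2⟩

end Geometric

section Geometric2

variable {L : Type*} [Lattice L] [BoundedOrder L]

theorem move_lexrev
    (hsemimod : ∀ a b : L, a ⊓ b ⋖ b → a ⋖ a ⊔ b)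
    (lab : L → L → ℕ) (hEL : IsELLabeling lab) (hstrong : PolygonStrong lab)
    {u z : MaxChain L} (h : ELPolygonMove lab u z) :
    LexLt (labelSeq lab u.elems) (labelSeq lab z.elems) ∧
    RevLt (labelSeq lab u.elems) (labelSeq lab z.elems) := by
  obtain ⟨a, b, x, v, w, y, hu, hz, hvw, hasc, hdesc, hl1, hl2⟩ :=
    diamond_move hsemimod lab hEL hstrong h
  set A := labelSeq lab (a ++ [x]) with hA
  set C := labelSeq lab (y :: b) with hC
  have hLu : labelSeq lab u.elems = A ++ lab x v :: lab v y :: C := by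
    rw [hu, labelSeq_decomp]
  have hLz : labelSeq lab z.elems = A ++ lab x w :: lab w y :: C := by
    rw [hz, labelSeq_decomp]
  obtain ⟨w1u, w2u, w3u, w4u⟩ := getD_window A (lab x v) (lab v y) C
  obtain ⟨w1z, w2z, w3z, w4z⟩ := getD_window A (lab x w) (lab w y) C
  constructor
  · refine ⟨A.length, fun j hj => ?_, ?_⟩
    · rw [hLu, hLz, w3u j hj, w3z j hj]
    · rw [hLu, hLz, w1u, w1z]; exact hl1
  · refine ⟨A.length + 1, fun j hj => ?_, ?_⟩
    · rw [hLu, hLz, w4u j hj, w4z j hj]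
    · rw [hLu, hLz, w2u, w2z]; exact hl2

theorem rtg_lex
    (hsemimod : ∀ a b : L, a ⊓ b ⋖ b → a ⋖ a ⊔ b)
    (lab : L → L → ℕ) (hEL : IsELLabeling lab) (hstrong : PolygonStrong lab)
    {z u' : MaxChain L} (h : ELCDLe lab z u') :
    z = u' ∨ (LexLt (labelSeq lab z.elems) (labelSeq lab u'.elems) ∧
      RevLt (labelSeq lab z.elems) (labelSeq lab u'.elems)) := by
  induction h with
  | refl => exact Or.inl rfl
  | tail h1 h2 ih =>
    have hm := move_lexrev hsemimod lab hEL hstrong h2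
    rcases ih with rfl | ⟨ha, hb⟩
    · exact Or.inr hm
    · exact Or.inr ⟨ha.trans hm.1, hb.trans hm.2⟩

theorem sandwich
    (hsemimod : ∀ a b : L, a ⊓ b ⋖ b → a ⋖ a ⊔ b)
    (lab : L → L → ℕ) (hEL : IsELLabeling lab) (hstrong : PolygonStrong lab)
    {u z u' : MaxChain L} {a b : List L} {x r s y : L}
    (hu : u.elems = a ++ x :: r :: y :: b) (hu' : u'.elems = a ++ x :: s :: y :: b)
    (hmv : ELPolygonMove lab u z) (hle : ELCDLe lab z u') :
    ∃ t, z.elems = a ++ x :: t :: y :: b ∧ ¬ lab x t ≤ lab t y ∧ lab x r ≤ lab r y := by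
  obtain ⟨a', b', x', v', w', y', hu2, hz, hvw', hasc', hdesc', hg1, hg2⟩ :=
    diamond_move hsemimod lab hEL hstrong hmv
  set A := labelSeq lab (a ++ [x]) with hA
  set C := labelSeq lab (y :: b) with hC
  set A' := labelSeq lab (a' ++ [x']) with hA'
  set C' := labelSeq lab (y' :: b') with hC'
  have hALen : A.length = a.length := by rw [hA, labelSeq_length]; simp
  have hA'Len : A'.length = a'.length := by rw [hA', labelSeq_length]; simp
  have hLu : labelSeq lab u.elems = A ++ lab x r :: lab r y :: C := by
    rw [hu, labelSeq_decomp]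
  have hLu2 : labelSeq lab u.elems = A' ++ lab x' v' :: lab v' y' :: C' := by
    rw [hu2, labelSeq_decomp]
  have hLu' : labelSeq lab u'.elems = A ++ lab x s :: lab s y :: C := by
    rw [hu', labelSeq_decomp]
  have hLz : labelSeq lab z.elems = A' ++ lab x' w' :: lab w' y' :: C' := by
    rw [hz, labelSeq_decomp]
  obtain ⟨p1u, p2u, p3u, p4u⟩ := getD_window A (lab x r) (lab r y) C
  obtain ⟨q1u, q2u, q3u, q4u⟩ := getD_window A' (lab x' v') (lab v' y') C'
  obtain ⟨p1u', p2u', p3u', p4u'⟩ := getD_window A (lab x s) (lab s y) C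
  obtain ⟨q1z, q2z, q3z, q4z⟩ := getD_window A' (lab x' w') (lab w' y') C'
  have hrtg := rtg_lex hsemimod lab hEL hstrong hle
  have hlen : A'.length = A.length := by
    rcases lt_trichotomy A'.length A.length with hp | hp | hp
    · exfalso
      have e1 : (labelSeq lab z.elems).getD A'.length 0 = lab x' w' := by
        rw [hLz]; exact q1z
      have e2 : (labelSeq lab u.elems).getD A'.length 0 = lab x' v' := by
        rw [hLu2]; exact q1u
      have e3 : (labelSeq lab u.elems).getD A'.length 0 = A.getD A'.length 0 := by
        rw [hLu]; exact p3u _ hp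
      have e4 : (labelSeq lab u'.elems).getD A'.length 0 = A.getD A'.length 0 := by
        rw [hLu']; exact p3u' _ hp
      have e5 : ∀ j, j < A'.length →
          (labelSeq lab z.elems).getD j 0 = (labelSeq lab u'.elems).getD j 0 := by
        intro j hj
        have t1 : (labelSeq lab z.elems).getD j 0 = A'.getD j 0 := by
          rw [hLz]; exact q3z j hj
        have t2 : (labelSeq lab u.elems).getD j 0 = A'.getD j 0 := by
          rw [hLu2]; exact q3u j hj
        have t3 : (labelSeq lab u.elems).getD j 0 = A.getD j 0 := by
          rw [hLu]; exact p3u j (hj.trans hp)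
        have t4 : (labelSeq lab u'.elems).getD j 0 = A.getD j 0 := by
          rw [hLu']; exact p3u' j (hj.trans hp)
        omega
      rcases hrtg with rfl | ⟨⟨qq, hag, hql⟩, _⟩
      · omega
      · rcases lt_trichotomy qq A'.length with h | rfl | h
        · have := e5 qq h; omega
        · omega
        · have := hag A'.length h; omega
    · exact hp
    · exfalso
      have e1 : (labelSeq lab z.elems).getD (A'.length + 1) 0 = lab w' y' := by
        rw [hLz]; exact q2z
      have e2 : (labelSeq lab u.elems).getD (A'.length + 1) 0 = lab v' y' := by
        rw [hLu2]; exact q2u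
      have e3 : (labelSeq lab u.elems).getD (A'.length + 1) 0
          = C.getD (A'.length + 1 - A.length - 2) 0 := by
        rw [hLu]; exact p4u _ (by omega)
      have e4 : (labelSeq lab u'.elems).getD (A'.length + 1) 0
          = C.getD (A'.length + 1 - A.length - 2) 0 := by
        rw [hLu']; exact p4u' _ (by omega)
      have e5 : ∀ j, A'.length + 1 < j →
          (labelSeq lab z.elems).getD j 0 = (labelSeq lab u'.elems).getD j 0 := by
        intro j hj
        have t1 : (labelSeq lab z.elems).getD j 0 = C'.getD (j - A'.length - 2) 0 := by
          rw [hLz]; exact q4z j hj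
        have t2 : (labelSeq lab u.elems).getD j 0 = C'.getD (j - A'.length - 2) 0 := by
          rw [hLu2]; exact q4u j hj
        have t3 : (labelSeq lab u.elems).getD j 0 = C.getD (j - A.length - 2) 0 := by
          rw [hLu]; exact p4u j (by omega)
        have t4 : (labelSeq lab u'.elems).getD j 0 = C.getD (j - A.length - 2) 0 := by
          rw [hLu']; exact p4u' j (by omega)
        omega
      rcases hrtg with rfl | ⟨_, ⟨qq, hag, hql⟩⟩
      · omega
      · rcases lt_trichotomy qq (A'.length + 1) with h | rfl | h
        · have := hag (A'.length + 1) h; omega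
        · omega
        · have := e5 qq h; omega
  have halen : a.length = a'.length := by omega
  obtain ⟨rfl, htails⟩ := List.append_inj (hu.symm.trans hu2) halen
  obtain ⟨rfl, rfl, rfl, rfl⟩ : x = x' ∧ r = v' ∧ y = y' ∧ b = b' := by
    simpa using htails
  exact ⟨w', hz, hdesc', hasc'⟩

end Geometric2

/-- let `L` be a finite geometric lattice (atomistic and upper
semimodular), let `ω` encode a linear order on the atoms of `L` (an injective
rank function on atoms), and let `lab` be the corresponding minimal labeling:
`lab x y` is the least `ω`-value of an atom below `y` but not below `x`.  If
`lab` is an EL-labeling, then it is polygon strong, and hence polygon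
complete. -/
theorem statement14 {L : Type*} [Lattice L] [BoundedOrder L] [Fintype L]
    (ω : L → ℕ) (hω : ∀ a b : L, IsAtom a → IsAtom b → ω a = ω b → a = b)
    (hatomistic : ∀ x : L, ∃ S : Finset L, (∀ a ∈ S, IsAtom a) ∧ S.sup id = x)
    (hsemimod : ∀ a b : L, a ⊓ b ⋖ b → a ⋖ a ⊔ b)
    (lab : L → L → ℕ)
    (hlab : ∀ x y : L, x ⋖ y →
        IsLeast (ω '' {a : L | IsAtom a ∧ a ≤ y ∧ ¬ a ≤ x}) (lab x y))
    (hEL : IsELLabeling lab) :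
    PolygonStrong lab ∧ ELPolygonComplete lab := by
  have hstrong : PolygonStrong lab := polygonStrong_of_minimal ω hω lab hlab
  refine ⟨hstrong, ?_⟩
  intro m m' hmv
  obtain ⟨a, b, x, v, w, y, hm, hm', hvw, hasc, hdesc, hl1, hl2⟩ :=
    diamond_move hsemimod lab hEL hstrong hmv
  have hneq : m ≠ m' := by
    intro h
    apply hvw
    have helems : m.elems = m'.elems := by rw [h]
    rw [hm, hm'] at helems
    simpa using helems
  refine ⟨⟨Relation.ReflTransGen.single hmv, hneq⟩, ?_⟩
  rintro z ⟨hmz, hmzne⟩ ⟨hzm', hzm'ne⟩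
  rcases Relation.ReflTransGen.cases_head hmz with heq | ⟨z₁, h₁, h₁'⟩
  · exact hmzne heq
  · have h1m' : ELCDLe lab z₁ m' := h₁'.trans hzm'
    by_cases hz1 : z₁ = m'
    · subst hz1
      rcases rtg_lex hsemimod lab hEL hstrong h₁' with rfl | ⟨hx1, _⟩
      · exact hzm'ne rfl
      · rcases rtg_lex hsemimod lab hEL hstrong hzm' with heq2 | ⟨hx2, _⟩
        · exact hzm'ne heq2
        · exact LexLt.irrefl (hx1.trans hx2)
    · obtain ⟨t, hz₁, hdesc₁, _⟩ :=
        sandwich hsemimod lab hEL hstrong hm hm' h₁ h1m'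
      rcases Relation.ReflTransGen.cases_head h1m' with heq | ⟨z₂, h₂, h₂'⟩
      · exact hz1 heq
      · obtain ⟨t₂, _, _, hasc₂⟩ :=
          sandwich hsemimod lab hEL hstrong hz₁ hm' h₂ h₂'
        exact hdesc₁ hasc₂
end

section
/- Let P be a finite bounded poset all of whose maximal chains have length n, and let λ be a CL-labeling of P with labels in a totally ordered set which is inversion ranked. Then: (a) λ is polygon complete; (b) the maximal chain descent order C(P,λ) is ranked with rank function m ↦ |inv_λ(m)|; and (c) a maximal chain m of P satisfies |inv_λ(m)| = n(n−1)/2 if and only if m has a descent at every one of its interior elements. -/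
variable {P : Type*} [PartialOrder P] [BoundedOrder P] [DecidableEq P]
variable {Λ : Type*} [PartialOrder Λ]

/-- The inversion set of a maximal chain with respect to a labeling with values
in a totally ordered set: pairs of edge positions `p.1 < p.2` (both edges of
`m`) whose labels appear in strictly decreasing order. -/
def invSet {K : Type*} [LinearOrder K] (lab : MaxChain P → ℕ → K)
    (m : MaxChain P) : Set (ℕ × ℕ) :=
  {p | p.1 < p.2 ∧ p.2 + 1 < m.elems.length ∧ lab m p.2 < lab m p.1}

/-- The number of inversions of a maximal chain. -/
noncomputable def invCount {K : Type*} [LinearOrder K] (lab : MaxChain P → ℕ → K)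
    (m : MaxChain P) : ℕ :=
  (invSet lab m).ncard

/-- `lab` is inversion ranked: each polygon move increases the number of
inversions by exactly one. -/
def InversionRanked {K : Type*} [LinearOrder K] (lab : MaxChain P → ℕ → K) : Prop :=
  ∀ m m' : MaxChain P, PolygonMove lab m m' →
    invCount lab m' = invCount lab m + 1

set_option linter.unusedSectionVars false

section MyAux2

lemma MaxChain.cov (m : MaxChain P) {i : ℕ} (h : i + 1 < m.elems.length) :
    m.elems[i] ⋖ m.elems[i+1] := by
  have := List.isChain_iff_getElem.mp m.chain' i (by omega)
  simpa using this

lemma MaxChain.pairwise_lt (m : MaxChain P) : m.elems.Pairwise (· < ·) :=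
  List.isChain_iff_pairwise.mp (m.chain'.imp fun _ _ h => h.lt)

lemma cdle_invCount_le {K : Type*} [LinearOrder K] (lab : MaxChain P → ℕ → K)
    (hinv : InversionRanked lab) {m z : MaxChain P} (h : CDLe lab m z) :
    invCount lab m ≤ invCount lab z := by
  induction h with
  | refl => exact le_refl _
  | tail _ hstep ih => have := hinv _ _ hstep; omega

lemma cdlt_invCount_lt {K : Type*} [LinearOrder K] (lab : MaxChain P → ℕ → K)
    (hinv : InversionRanked lab) {m z : MaxChain P} (h : CDLt lab m z) :
    invCount lab m < invCount lab z := by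
  rcases h.1.cases_head with rfl | ⟨c, hc, hcz⟩
  · exact absurd rfl h.2
  · have h1 := hinv _ _ hc
    have h2 := cdle_invCount_le lab hinv hcz
    omega

lemma descent_of_invCount_ne_zero {K : Type*} [LinearOrder K] (lab : MaxChain P → ℕ → K)
    (m : MaxChain P) (h : invCount lab m ≠ 0) :
    ∃ k, k + 2 < m.elems.length ∧ lab m (k+1) < lab m k := by
  obtain ⟨⟨i, j⟩, h1, h2, h3⟩ := Set.nonempty_of_ncard_ne_zero h
  by_contra hcon
  push_neg at hcon
  have mono : ∀ jj, jj + 1 < m.elems.length → ∀ ii, ii ≤ jj → lab m ii ≤ lab m jj := by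
    intro jj
    induction jj with
    | zero => intro _ ii hii; simp [Nat.le_zero.mp hii]
    | succ t ih =>
      intro hlen ii hii
      rcases Nat.lt_or_ge ii (t+1) with hlt | hge
      · exact le_trans (ih (by omega) ii (by omega)) (hcon t (by omega))
      · have : ii = t + 1 := by omega
        rw [this]
  exact absurd (mono j (by omega) i (le_of_lt h1)) (not_le.2 h3)

lemma ncard_fullSet (n : ℕ) :
    ({p : ℕ × ℕ | p.1 < p.2 ∧ p.2 < n} : Set (ℕ × ℕ)).ncard = n * (n - 1) / 2 := by
  classical
  have hinj : Function.Injective (fun p : (Σ _ : ℕ, ℕ) => (p.2, p.1)) := by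
    rintro ⟨a1, a2⟩ ⟨b1, b2⟩ h
    simp only [Prod.mk.injEq] at h
    simp [h.1, h.2]
  have hset : ({p : ℕ × ℕ | p.1 < p.2 ∧ p.2 < n} : Set (ℕ × ℕ)) =
      ↑(((Finset.range n).sigma fun j => Finset.range j).map ⟨_, hinj⟩) := by
    ext ⟨i, j⟩
    simp only [Set.mem_setOf_eq, Finset.coe_map, Set.mem_image, Finset.mem_coe,
      Finset.mem_sigma, Finset.mem_range, Function.Embedding.coeFn_mk]
    constructor
    · rintro ⟨hij, hjn⟩
      exact ⟨⟨j, i⟩, ⟨hjn, hij⟩, rfl⟩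
    · rintro ⟨⟨a, b⟩, ⟨han, hba⟩, heq⟩
      simp only [Prod.mk.injEq] at heq
      obtain ⟨rfl, rfl⟩ := heq
      exact ⟨hba, han⟩
  rw [hset, Set.ncard_coe_finset, Finset.card_map, Finset.card_sigma]
  simp [Finset.sum_range_id]


lemma exists_polygonMove {K : Type*} [LinearOrder K] (lab : MaxChain P → ℕ → K)
    (hCL : IsCLLabeling lab) (m : MaxChain P) (k : ℕ)
    (hk : k + 2 < m.elems.length) (hd : lab m (k + 1) < lab m k) :
    ∃ m'' : MaxChain P, PolygonMove lab m'' m := by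
  classical
  set L := m.elems with hL
  have hkL : k < L.length := by omega
  have hk1 : k + 1 < L.length := by omega
  have hk2 : k + 2 < L.length := hk
  set x := L[k] with hx
  set w := L[k+1] with hw
  set y := L[k+2] with hy
  have hxw : x ⋖ w := MaxChain.cov m hk1
  have hwy : w ⋖ y := MaxChain.cov m hk2
  have hxy : x < y := hxw.lt.trans hwy.lt
  set r := L.take (k+1) with hr
  have rlen : r.length = k + 1 := by
    rw [hr, List.length_take]; omega
  have hroot : IsRootTo r x := by
    refine ⟨m.chain'.take _, ?_, ?_⟩
    · have h0 : r[0]? = L[0]? := by simp [hr, List.getElem?_take]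
      rw [List.head?_eq_getElem?, h0, ← List.head?_eq_getElem?]
      exact m.head_bot
    · rw [List.getLast?_eq_getElem?, rlen, Nat.add_sub_cancel,
        show r[k]? = L[k]? by simp [hr, List.getElem?_take],
        List.getElem?_eq_getElem hkL]
  obtain ⟨⟨m₁, hin, hasc⟩, -, -⟩ := hCL.2 r x y hroot hxy
  set T := m₁.elems with hT
  have htake : T.take (k+1) = r := by rw [← rlen]; exact hin.1
  have hyT : y ∈ T := hin.2
  set idx := T.idxOf y with hidxdef
  have hidxlen : idx < T.length := List.idxOf_lt_length_iff.2 hyT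
  have hTidx : T[idx] = y := List.getElem_idxOf hidxlen
  have plt : ∀ i j, (hi : i < T.length) → (hj : j < T.length) → i < j → T[i] < T[j] :=
    List.pairwise_iff_getElem.mp (MaxChain.pairwise_lt m₁)
  have hTlen : k + 1 ≤ T.length := by
    have := congrArg List.length htake
    rw [List.length_take, rlen] at this
    omega
  have hagree : ∀ i, i < k + 1 → T[i]? = L[i]? := by
    intro i hi
    have h2 := congrArg (fun l => l[i]?) htake
    simpa [List.getElem?_take, hi, hr] using h2
  have hTkk : k < T.length := by omega
  have hTkx : T[k] = x := by
    have h2 := hagree k (by omega)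
    rw [List.getElem?_eq_getElem hTkk, List.getElem?_eq_getElem hkL] at h2
    exact Option.some.inj h2
  have hidx : k + 2 ≤ idx := by
    by_contra hcon
    push_neg at hcon
    rcases lt_or_eq_of_le (show idx ≤ k + 1 by omega) with h | h
    · have hle : y ≤ x := by
        rcases lt_or_eq_of_le (Nat.lt_succ_iff.mp h) with h' | h'
        · have h2 : T[idx] < T[k] := plt idx k hidxlen hTkk h'
          rw [hTidx, hTkx] at h2
          exact le_of_lt h2
        · have h2 : T[idx]? = T[k]? := by rw [h']
          rw [List.getElem?_eq_getElem hidxlen, List.getElem?_eq_getElem hTkk,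
            hTidx, hTkx] at h2
          exact le_of_eq (Option.some.inj h2)
      exact hxy.not_ge hle
    · have hcov : T[k] ⋖ T[k+1] := MaxChain.cov m₁ (show k+1 < T.length by omega)
      have hq : T[idx]? = some y := by rw [List.getElem?_eq_getElem hidxlen, hTidx]
      rw [h, List.getElem?_eq_getElem (show k+1 < T.length by omega)] at hq
      rw [hTkx, Option.some.inj hq] at hcov
      exact hcov.2 hxw.lt hwy.lt
  -- the new chain
  set B := L.drop (k+3) with hB
  set E := T.take (idx+1) ++ B with hE
  have hlastTake : (T.take (idx+1)).getLast? = some y := by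
    rw [List.getLast?_eq_getElem?, List.length_take,
      show (idx + 1) ⊓ T.length = idx + 1 by omega, Nat.add_sub_cancel,
      show (T.take (idx+1))[idx]? = T[idx]? by simp [List.getElem?_take],
      List.getElem?_eq_getElem hidxlen, hTidx]
  have chainE : E.Chain' (· ⋖ ·) := by
    refine List.IsChain.append (m₁.chain'.take _) (m.chain'.drop _) ?_
    intro u hu v hv
    rw [hlastTake, Option.mem_some_iff] at hu
    subst hu
    rw [List.head?_eq_getElem?, hB, List.getElem?_drop] at hv
    have hv' : L[k+3]? = some v := hv
    have hk3 : k + 3 < L.length := by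
      rcases Nat.lt_or_ge (k+3) L.length with h | h
      · exact h
      · rw [List.getElem?_eq_none (by omega)] at hv'; cases hv'
    rw [List.getElem?_eq_getElem hk3] at hv'
    have hvv : v = L[k+3] := (Option.some.inj hv').symm
    rw [hvv, hy]
    exact MaxChain.cov m (show (k+2)+1 < L.length from hk3)
  have headE : E.head? = some ⊥ := by
    rw [List.head?_eq_getElem?, hE, List.getElem?_append,
      if_pos (by rw [List.length_take]; omega),
      show (T.take (idx+1))[0]? = T[0]? by simp [List.getElem?_take],
      ← List.head?_eq_getElem?]
    exact m₁.head_bot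
  have lastE : E.getLast? = some ⊤ := by
    rw [hE, List.getLast?_append]
    rcases Nat.lt_or_ge (k+3) L.length with h | h
    · have hBlast : B.getLast? = some ⊤ := by
        rw [List.getLast?_eq_getElem?, hB, List.length_drop, List.getElem?_drop,
          show k + 3 + (L.length - (k+3) - 1) = L.length - 1 by omega,
          ← List.getLast?_eq_getElem?]
        exact m.last_top
      rw [hBlast]; rfl
    · have hBnil : B = [] := by rw [hB]; exact List.drop_eq_nil_of_le (by omega)
      rw [hBnil]
      simp only [List.getLast?_nil, Option.none_or]
      rw [hlastTake]
      have hl3 : L.length = k + 3 := by omega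
      have htp : L[k+2] = ⊤ := by
        have h2 := m.last_top
        rw [List.getLast?_eq_getElem?, hl3, show k + 3 - 1 = k + 2 from rfl,
          List.getElem?_eq_getElem hk2] at h2
        exact Option.some.inj h2
      rw [hy, htp]
  set m'' : MaxChain P := ⟨E, chainE, headE, lastE⟩ with hm''
  set a := L.take k with ha
  set cl := (T.take idx).drop (k+1) with hc
  have halen : a.length = k := by rw [ha, List.length_take]; omega
  have hclen : cl.length = idx - (k+1) := by
    rw [hc, List.length_drop, List.length_take]; omega
  have htakek1 : L.take (k+1) = a ++ [x] := by
    rw [List.take_succ, List.getElem?_eq_getElem hkL]; rfl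
  have hdec : L = a ++ x :: w :: y :: B := by
    rw [hx, hw, hy, hB]
    conv_lhs => rw [← List.take_append_drop k L]
    rw [List.drop_eq_getElem_cons hkL,
      List.drop_eq_getElem_cons (show k+1 < L.length from hk1),
      List.drop_eq_getElem_cons (show k+1+1 < L.length from hk2)]
  have htakeidx : T.take idx = (a ++ [x]) ++ cl := by
    conv_lhs => rw [← List.take_append_drop (k+1) (T.take idx)]
    rw [List.take_take, show (k+1) ⊓ idx = k + 1 by omega, htake, hr, htakek1]
  have hdecE : E = a ++ x :: (cl ++ y :: B) := by
    rw [hE, List.take_succ, List.getElem?_eq_getElem hidxlen, hTidx, htakeidx]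
    simp
  have hcne : cl ≠ [] := by
    intro h
    have := congrArg List.length h
    rw [hclen] at this
    simp at this
    omega
  -- w ∉ cl
  have hwc : w ∉ cl := by
    intro hwmem
    obtain ⟨jj, hjlt, hjw⟩ := List.getElem_of_mem hwmem
    have hjlt' : jj < idx - (k+1) := by rwa [hclen] at hjlt
    have hTjq : T[k+1+jj]? = some w := by
      have h1 : cl[jj]? = some w := by rw [List.getElem?_eq_getElem hjlt, hjw]
      rw [hc, List.getElem?_drop, List.getElem?_take, if_pos (by omega)] at h1
      exact h1
    have hTj : T[k+1+jj] = w := by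
      rw [List.getElem?_eq_getElem (by omega)] at hTjq
      exact Option.some.inj hTjq
    rcases Nat.eq_zero_or_pos jj with rfl | hjj
    · have hTk1w : T[k+1] = w := hTj
      rcases Nat.lt_or_ge (k+2) idx with hlt | hge
      · have h1 : T[k+1] < T[k+2] := plt (k+1) (k+2) (by omega) (by omega) (by omega)
        have h2 : T[k+2] < T[idx] := plt (k+2) idx (by omega) hidxlen hlt
        rw [hTk1w] at h1
        rw [hTidx] at h2
        exact hwy.2 h1 h2
      · have hidx2 : idx = k + 2 := by omega
        -- label contradiction
        have e1 : T.take (k+3) = L.take (k+3) := by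
          apply List.ext_getElem?
          intro i
          rw [List.getElem?_take, List.getElem?_take]
          rcases Nat.lt_or_ge i (k+3) with hlt | hge2
          · rw [if_pos hlt, if_pos hlt]
            rcases Nat.lt_or_ge i (k+1) with hi | hi
            · exact hagree i hi
            · rcases (show i = k+1 ∨ i = k+2 by omega) with rfl | rfl
              · rw [List.getElem?_eq_getElem (show k+1 < T.length by omega),
                  List.getElem?_eq_getElem hk1, hTk1w, ← hw]
              · have hq : T[idx]? = some y := by
                  rw [List.getElem?_eq_getElem hidxlen, hTidx]
                rw [hidx2] at hq
                rw [hq, List.getElem?_eq_getElem hk2, ← hy]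
          · rw [if_neg (by omega), if_neg (by omega)]
        have hlabeq : ∀ j, j < k + 2 → lab m₁ j = lab m j :=
          hCL.1 m₁ m (k+2) e1
        have hascend : lab m₁ k ≤ lab m₁ (k+1) :=
          hasc k (by rw [rlen]; omega) (by omega)
        rw [hlabeq k (by omega), hlabeq (k+1) (by omega)] at hascend
        exact absurd hascend (not_le.2 hd)
    · have h1 : T[k] < T[k+1] := plt k (k+1) hTkk (by omega) (by omega)
      have h2 : T[k+1] < T[k+1+jj] := plt (k+1) (k+1+jj) (by omega) (by omega) (by omega)
      rw [hTkx] at h1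
      rw [hTj] at h2
      exact hxw.2 h1 h2
  -- ascending restriction
  have hEtake : E.take (idx+1) = T.take (idx+1) := by
    rw [hE]
    exact List.take_left' (by rw [List.length_take]; omega)
  have hlabagree : ∀ j, j < idx → lab m'' j = lab m₁ j :=
    hCL.1 m'' m₁ idx hEtake
  have hascres : RestrAscending lab m'' k idx := by
    intro j hjk hj2
    rw [hlabagree j (by omega), hlabagree (j+1) (by omega)]
    exact hasc j (by rw [rlen]; omega) hj2
  refine ⟨m'', a, cl, B, x, w, y, hdecE, hdec, hcne, hwc, ?_, ?_⟩
  · rw [halen, hclen, show k + (idx - (k+1)) + 1 = idx by omega]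
    exact hascres
  · rw [halen]
    exact not_le.2 hd

lemma invSet_subset {K : Type*} [LinearOrder K] (lab : MaxChain P → ℕ → K)
    (m : MaxChain P) (n : ℕ) (hlen : m.elems.length = n + 1) :
    invSet lab m ⊆ {p : ℕ × ℕ | p.1 < p.2 ∧ p.2 < n} := by
  rintro ⟨i, j⟩ ⟨h1, h2, h3⟩
  exact ⟨h1, by omega⟩

lemma part_c {K : Type*} [LinearOrder K] (lab : MaxChain P → ℕ → K)
    (m : MaxChain P) (n : ℕ) (hlen : m.elems.length = n + 1) :
    invCount lab m = n * (n - 1) / 2 ↔ DescendingMC lab m := by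
  classical
  set S : Set (ℕ × ℕ) := {p : ℕ × ℕ | p.1 < p.2 ∧ p.2 < n} with hS
  have hSfin : S.Finite := by
    apply Set.Finite.subset ((Set.finite_Iio n).prod (Set.finite_Iio n))
    rintro ⟨i, j⟩ ⟨h1, h2⟩
    exact ⟨by simpa using by omega, by simpa using h2⟩
  have hsub : invSet lab m ⊆ S := invSet_subset lab m n hlen
  have hScard : S.ncard = n * (n - 1) / 2 := ncard_fullSet n
  constructor
  · intro h
    have heq : invSet lab m = S := by
      apply Set.eq_of_subset_of_ncard_le hsub _ hSfin
      rw [hScard, ← h]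
      exact le_of_eq rfl
    intro i hi hilen
    have hmem : (i - 1, i) ∈ invSet lab m := by
      rw [heq]
      exact ⟨by omega, by omega⟩
    exact not_le.2 hmem.2.2
  · intro h
    have step : ∀ t, t + 1 < n → lab m (t+1) < lab m t := by
      intro t ht
      have := h (t+1) (by omega) (by omega)
      simpa using not_le.mp this
    have chainlt : ∀ j, j < n → ∀ i, i < j → lab m j < lab m i := by
      intro j
      induction j with
      | zero => intro _ i hi; omega
      | succ t ih =>
        intro hjn i hij
        rcases Nat.lt_or_ge i t with hlt | hge
        · exact lt_trans (step t hjn) (ih (by omega) i hlt)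
        · have : i = t := by omega
          rw [this]
          exact step t hjn
    have heq : invSet lab m = S := by
      apply Set.Subset.antisymm hsub
      rintro ⟨i, j⟩ ⟨h1, h2⟩
      exact ⟨h1, by omega, chainlt j h2 i h1⟩
    rw [invCount, heq, hScard]

end MyAux2

/-- if all maximal chains of `P` have length `n` and `lab` is an
inversion ranked CL-labeling with labels in a totally ordered set, then
(a) `lab` is polygon complete; (b) the maximal chain descent order is ranked
with rank function the number of inversions (it is `0` on the least element and
increases by exactly one along each cover relation); and (c) a maximal chain
has `n(n-1)/2` inversions iff it has a descent at every interior element. -/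
theorem statement16 [Fintype P] {K : Type*} [LinearOrder K]
    (lab : MaxChain P → ℕ → K) (n : ℕ) (hCL : IsCLLabeling lab)
    (hlen : ∀ m : MaxChain P, m.elems.length = n + 1)
    (hinv : InversionRanked lab) :
    PolygonComplete lab ∧
      ((∀ m₀ : MaxChain P, (∀ m : MaxChain P, CDLe lab m₀ m) →
          invCount lab m₀ = 0) ∧
        ∀ m m' : MaxChain P, CDCovBy lab m m' →
          invCount lab m' = invCount lab m + 1) ∧
      (∀ m : MaxChain P, invCount lab m = n * (n - 1) / 2 ↔ DescendingMC lab m) := by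
  classical
  refine ⟨?_, ⟨?_, ?_⟩, ?_⟩
  · -- (a) polygon complete
    intro m m' hmove
    have h1 : invCount lab m' = invCount lab m + 1 := hinv _ _ hmove
    have hlt : CDLt lab m m' := by
      refine ⟨Relation.ReflTransGen.single hmove, ?_⟩
      intro he
      rw [he] at h1
      omega
    refine ⟨hlt, ?_⟩
    intro z hz1 hz2
    have ha := cdlt_invCount_lt lab hinv hz1
    have hb := cdlt_invCount_lt lab hinv hz2
    omega
  · -- (b) rank 0 at bottom
    intro m₀ hmin
    by_contra h0
    obtain ⟨k, hk, hdk⟩ := descent_of_invCount_ne_zero lab m₀ h0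
    obtain ⟨m'', hmv⟩ := exists_polygonMove lab hCL m₀ k hk hdk
    have h1 := hinv _ _ hmv
    have h2 := cdle_invCount_le lab hinv (hmin m'')
    omega
  · -- (b) covers increase rank by one
    intro m m' hcov
    rcases hcov.1.1.cases_head with he | ⟨cmid, hstep, hrest⟩
    · exact absurd he hcov.1.2
    · rcases eq_or_ne cmid m' with rfl | hne
      · exact hinv _ _ hstep
      · exfalso
        refine hcov.2 cmid ⟨Relation.ReflTransGen.single hstep, ?_⟩ ⟨hrest, hne⟩
        intro he
        have := hinv _ _ hstep
        rw [← he] at this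
        omega
  · -- (c)
    intro m
    exact part_c lab m n (hlen m)
end

section
/- Let Bₙ be the Boolean lattice of all subsets of {1,…,n} ordered by inclusion, with the edge labeling λ given by λ(B, B ∪ {i}) = i for each cover B ⋖ B ∪ {i}. Then λ is an EL-labeling of Bₙ, and the map sending each maximal chain m of Bₙ to its label sequence λ(m), read as the one-line notation of a permutation of {1,…,n}, is an order isomorphism from the maximal chain descent order C(Bₙ, λ) onto the weak order on the symmetric group Sₙ. -/
variable {P : Type*} [PartialOrder P] [BoundedOrder P]
variable {Λ : Type*} [PartialOrder Λ]

/-- The inversion set of a word `l` (read as the one-line notation of a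
permutation): pairs of values `a < b` of `l` such that `b` occurs before `a`
in `l`. -/
def InvW {α : Type*} [LinearOrder α] (l : List α) : Set (α × α) :=
  {p | p.1 ∈ l ∧ p.2 ∈ l ∧ p.1 < p.2 ∧ l.idxOf p.2 < l.idxOf p.1}

namespace S17

open List

section Lists

variable {P Λ : Type*}

lemma labelSeq_cons_cons (lab : P → P → Λ) (a b : P) (t : List P) :
    labelSeq lab (a :: b :: t) = lab a b :: labelSeq lab (b :: t) := rfl

lemma labelSeq_nil (lab : P → P → Λ) : labelSeq lab ([] : List P) = [] := rfl

lemma labelSeq_singleton (lab : P → P → Λ) (a : P) : labelSeq lab [a] = [] := rfl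

lemma labelSeq_cons_head (lab : P → P → Λ) {L : List P} {z : P} (h : L.head? = some z) (x : P) :
    labelSeq lab (x :: L) = lab x z :: labelSeq lab L := by
  cases L with
  | nil => simp at h
  | cons b t =>
    simp only [head?_cons, Option.some.injEq] at h
    subst h; rfl

lemma head?_append_cons (a : List P) (x : P) (L : List P) :
    (a ++ x :: L).head? = (a ++ [x]).head? := by
  cases a <;> simp

lemma labelSeq_length (lab : P → P → Λ) (c : List P) :
    (labelSeq lab c).length = c.length - 1 := by
  cases c with
  | nil => rfl
  | cons a t => simp [labelSeq]

lemma labelSeq_append (lab : P → P → Λ) (p : List P) (x : P) (q : List P) :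
    labelSeq lab (p ++ x :: q) = labelSeq lab (p ++ [x]) ++ labelSeq lab (x :: q) := by
  induction p with
  | nil => simp [labelSeq_singleton]
  | cons a p ih =>
    cases p with
    | nil => simp [labelSeq_cons_cons, labelSeq_singleton]
    | cons b p' =>
      have h1 : a :: b :: p' ++ x :: q = a :: b :: (p' ++ x :: q) := by simp
      have h2 : a :: b :: p' ++ [x] = a :: b :: (p' ++ [x]) := by simp
      rw [h1, h2, labelSeq_cons_cons, labelSeq_cons_cons]
      have h3 : b :: (p' ++ x :: q) = (b :: p') ++ x :: q := rfl
      have h4 : b :: (p' ++ [x]) = (b :: p') ++ [x] := rfl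
      rw [h3, h4, ih]
      simp

lemma head?_scanl {α β : Type*} (f : β → α → β) (b : β) (l : List α) :
    (List.scanl f b l).head? = some b := by
  cases l <;> simp [List.scanl_cons]

lemma getLast?_scanl {α β : Type*} (f : β → α → β) (b : β) (l : List α) :
    (List.scanl f b l).getLast? = some (l.foldl f b) := by
  induction l generalizing b with
  | nil => simp
  | cons a l ih =>
    rw [List.scanl_cons]
    have hne : List.scanl f (f b a) l ≠ [] := by
      have := List.length_scanl (f := f) (init := f b a) (as := l)
      intro h; rw [h] at this; simp at this
    rw [List.getLast?_cons, ih]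
    rfl

lemma sorted_lex_min {α : Type*} [LinearOrder α] :
    ∀ (l l' : List α), l.Pairwise (· ≤ ·) → l'.Perm l → l ≠ l' →
      List.Lex (· < ·) l l' := by
  intro l
  induction l with
  | nil =>
    intro l' _ hp hne
    exact absurd hp.eq_nil.symm hne
  | cons a t ih =>
    intro l' hs hp hne
    cases l' with
    | nil => exact absurd hp.symm.eq_nil (by simp)
    | cons a' t' =>
      rcases eq_or_ne a' a with rfl | hne'
      · refine List.Lex.cons (ih t' hs.of_cons hp.cons_inv ?_)
        intro h
        exact hne (by rw [h])
      · have ha' : a' ∈ a :: t := hp.subset List.mem_cons_self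
        have hlt : a < a' := by
          rcases List.mem_cons.mp ha' with h | h
          · exact absurd h hne'
          · exact lt_of_le_of_ne (List.rel_of_pairwise_cons hs h) (Ne.symm hne')
        exact List.Lex.rel hlt

end Lists

section Bool

variable {n : ℕ}

/-- scanl-insert chain builder. -/
def sc (x : Finset (Fin n)) (l : List (Fin n)) : List (Finset (Fin n)) :=
  List.scanl (fun B i => insert i B) x l

lemma sc_nil (x : Finset (Fin n)) : sc x [] = [x] := rfl

lemma sc_cons (x : Finset (Fin n)) (a : Fin n) (l : List (Fin n)) :
    sc x (a :: l) = x :: sc (insert a x) l := by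
  simp [sc, List.scanl_cons]

lemma foldl_insert (l : List (Fin n)) : ∀ (x : Finset (Fin n)),
    l.foldl (fun B i => insert i B) x = x ∪ l.toFinset := by
  induction l with
  | nil => intro x; simp
  | cons a l ih =>
    intro x
    rw [List.foldl_cons, ih]
    simp [Finset.insert_union, Finset.union_insert]

lemma sc_head (x : Finset (Fin n)) (l : List (Fin n)) : (sc x l).head? = some x :=
  head?_scanl _ _ _

lemma sc_last (x : Finset (Fin n)) (l : List (Fin n)) :
    (sc x l).getLast? = some (x ∪ l.toFinset) := by
  rw [sc, getLast?_scanl, foldl_insert]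

variable (lab : Finset (Fin n) → Finset (Fin n) → Fin n)
variable (hlab : ∀ (B : Finset (Fin n)) (i : Fin n), i ∉ B → lab B (insert i B) = i)

include hlab

lemma cov_lab {B C : Finset (Fin n)} (h : B ⋖ C) :
    lab B C ∉ B ∧ C = insert (lab B C) B := by
  obtain ⟨i, hi, hC⟩ := Finset.covBy_iff_exists_insert.mp h
  subst hC
  rw [hlab B i hi]
  exact ⟨hi, rfl⟩

lemma sc_chain (l : List (Fin n)) : ∀ (x : Finset (Fin n)), l.Nodup → (∀ i ∈ l, i ∉ x) →
    (sc x l).Chain' (· ⋖ ·) ∧ labelSeq lab (sc x l) = l := by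
  induction l with
  | nil => intro x _ _; exact ⟨by rw [sc_nil]; exact List.isChain_singleton _, rfl⟩
  | cons a l ih =>
    intro x hnd hdisj
    have ha : a ∉ x := hdisj a (by simp)
    have hal : a ∉ l := (List.nodup_cons.mp hnd).1
    obtain ⟨ihc, ihl⟩ := ih (insert a x) (List.nodup_cons.mp hnd).2
      (fun i hi => by
        simp only [Finset.mem_insert, not_or]
        exact ⟨fun h => hal (h ▸ hi), hdisj i (List.mem_cons_of_mem _ hi)⟩)
    rw [sc_cons]
    constructor
    · rw [List.Chain', List.isChain_cons]
      refine ⟨fun y hy => ?_, ihc⟩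
      rw [sc_head] at hy
      obtain rfl : y = insert a x := by simpa using hy.symm
      exact Finset.covBy_insert ha
    · rw [labelSeq_cons_head _ (sc_head _ _), hlab x a ha, ihl]

lemma recon : ∀ (c : List (Finset (Fin n))), ∀ (x : Finset (Fin n)),
    c.Chain' (· ⋖ ·) → c.head? = some x →
    c = sc x (labelSeq lab c) ∧ (∀ i ∈ labelSeq lab c, i ∉ x) ∧ (labelSeq lab c).Nodup := by
  intro c
  induction c with
  | nil => intro x _ h; simp at h
  | cons z rest ih =>
    intro x hch hh
    obtain rfl : z = x := by simpa using hh
    cases rest with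
    | nil => exact ⟨by simp [labelSeq_singleton, sc_nil], by simp [labelSeq_singleton],
        by simp [labelSeq_singleton]⟩
    | cons w t =>
      have hcov : z ⋖ w := (List.isChain_cons_cons.mp hch).1
      have hch' : (w :: t).Chain' (· ⋖ ·) := (List.isChain_cons_cons.mp hch).2
      obtain ⟨hnotin, hins⟩ := cov_lab lab hlab hcov
      obtain ⟨heq, hdisj, hnd⟩ := ih w hch' (by simp)
      refine ⟨?_, ?_, ?_⟩
      · rw [labelSeq_cons_cons, sc_cons, ← hins, ← heq]
      · rw [labelSeq_cons_cons]
        intro k hk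
        rcases List.mem_cons.mp hk with rfl | hk
        · exact hnotin
        · intro hkz
          exact hdisj k hk (hins ▸ Finset.mem_insert_of_mem hkz)
      · rw [labelSeq_cons_cons, List.nodup_cons]
        have hm : lab z w ∈ w := by
          nth_rewrite 1 [hins]
          exact Finset.mem_insert_self _ _
        refine ⟨?_, hnd⟩
        intro h
        exact hdisj (lab z w) h hm

lemma sat_facts {c : List (Finset (Fin n))} {x y : Finset (Fin n)} (h : IsSatChain c x y) :
    c = sc x (labelSeq lab c) ∧ (labelSeq lab c).Nodup ∧ (∀ i ∈ labelSeq lab c, i ∉ x) ∧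
      x ∪ (labelSeq lab c).toFinset = y ∧ (labelSeq lab c).toFinset = y \ x ∧
      y.card = x.card + (labelSeq lab c).length := by
  obtain ⟨hch, hh, hl⟩ := h
  obtain ⟨heq, hdisj, hnd⟩ := recon lab hlab c x hch hh
  have hdj : Disjoint x (labelSeq lab c).toFinset := by
    rw [Finset.disjoint_right]
    intro a ha
    exact hdisj a (List.mem_toFinset.mp ha)
  have hun : x ∪ (labelSeq lab c).toFinset = y := by
    have := sc_last x (labelSeq lab c)
    rw [← heq, hl] at this
    exact (Option.some_inj.mp this).symm
  refine ⟨heq, hnd, hdisj, hun, ?_, ?_⟩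
  · rw [← hun, Finset.union_sdiff_cancel_left hdj]
  · rw [← hun, Finset.card_union_of_disjoint hdj, List.toFinset_card_of_nodup hnd]


lemma el_labeling : IsELLabeling lab := by
  intro x y hxy
  have hsub : x ⊆ y := hxy.le
  set s := Finset.sort (y \ x) (· ≤ ·) with hs
  have hsnd : s.Nodup := Finset.sort_nodup _ _
  have hsdisj : ∀ i ∈ s, i ∉ x := by
    intro i hi
    have := (Finset.mem_sort (α := Fin n) (· ≤ ·)).mp hi
    exact (Finset.mem_sdiff.mp this).2
  obtain ⟨hch, hlabels⟩ := sc_chain lab hlab s x hsnd hsdisj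
  have hsat : IsSatChain (sc x s) x y := by
    refine ⟨hch, sc_head _ _, ?_⟩
    rw [sc_last]
    congr 1
    rw [hs, Finset.sort_toFinset]
    exact Finset.union_sdiff_of_subset hsub
  have hasc : AscLabels lab (sc x s) := by
    unfold AscLabels
    rw [hlabels]
    exact List.isChain_iff_pairwise.mpr (Finset.pairwise_sort _ _)
  -- labels of any ascending sat chain from x to y equal s
  have key : ∀ c : List (Finset (Fin n)), IsSatChain c x y → AscLabels lab c →
      labelSeq lab c = s := by
    intro c hsatc hascc
    obtain ⟨heqc, hndc, _, _, hsdf, _⟩ := sat_facts lab hlab hsatc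
    have hsorted : (labelSeq lab c).Pairwise (· ≤ ·) :=
      List.isChain_iff_pairwise.mp hascc
    have hperm : (labelSeq lab c).Perm s := by
      refine List.perm_of_nodup_nodup_toFinset_eq hndc hsnd ?_
      rw [hsdf, hs, Finset.sort_toFinset]
    exact List.Perm.eq_of_pairwise' hsorted (Finset.pairwise_sort _ _) hperm
  constructor
  · refine ⟨sc x s, ⟨hsat, hasc⟩, ?_⟩
    intro c ⟨hsatc, hascc⟩
    have h1 := (sat_facts lab hlab hsatc).1
    rw [h1, key c hsatc hascc]
  · intro c c' hsatc hsatc' hascc hne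
    have hl : labelSeq lab c = s := key c hsatc hascc
    obtain ⟨heqc', hndc', _, _, hsdf', _⟩ := sat_facts lab hlab hsatc'
    have hperm' : (labelSeq lab c').Perm s := by
      refine List.perm_of_nodup_nodup_toFinset_eq hndc' hsnd ?_
      rw [hsdf', hs, Finset.sort_toFinset]
    have hlne : labelSeq lab c ≠ labelSeq lab c' := by
      intro h
      apply hne
      rw [(sat_facts lab hlab hsatc).1, (sat_facts lab hlab hsatc').1, h]
    rw [hl]
    rw [hl] at hlne
    exact sorted_lex_min s (labelSeq lab c') (Finset.pairwise_sort _ _) hperm' hlne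

lemma labels_inj (m m' : MaxChain (Finset (Fin n)))
    (h : labelSeq lab m.elems = labelSeq lab m'.elems) : m = m' := by
  have h1 := (recon lab hlab m.elems ⊥ m.chain' m.head_bot).1
  have h2 := (recon lab hlab m'.elems ⊥ m'.chain' m'.head_bot).1
  have he : m.elems = m'.elems := by rw [h1, h2, h]
  cases m; cases m'
  simpa using he

lemma labels_surj (l : List (Fin n)) (hp : l.Perm (List.finRange n)) :
    ∃ m : MaxChain (Finset (Fin n)), labelSeq lab m.elems = l := by
  have hnd : l.Nodup := hp.symm.nodup (List.nodup_finRange n)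
  obtain ⟨hch, hls⟩ := sc_chain lab hlab l ∅ hnd (by simp)
  have hbot : (⊥ : Finset (Fin n)) = ∅ := rfl
  refine ⟨⟨sc ∅ l, hch, by rw [sc_head, hbot], ?_⟩, hls⟩
  rw [sc_last]
  congr 1
  have : l.toFinset = Finset.univ := by
    ext i
    simp [hp.mem_iff]
  rw [this]
  simp [Finset.top_eq_univ]

end Bool

section Words

variable {α : Type*} [LinearOrder α] [Fintype α]

/-- Swap an adjacent ascent `i < j` into a descent. -/
def Step (l l' : List α) : Prop :=
  ∃ (u v : List α) (i j : α), i < j ∧ l = u ++ i :: j :: v ∧ l' = u ++ j :: i :: v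

lemma step_perm {l l' : List α} (h : Step l l') : l'.Perm l := by
  obtain ⟨u, v, i, j, _, rfl, rfl⟩ := h
  exact List.Perm.append_left u (List.Perm.swap i j v)

lemma step_invW {u v : List α} {i j : α} (hij : i < j)
    (hnd : (u ++ i :: j :: v).Nodup) :
    InvW (u ++ j :: i :: v) = insert ((i, j) : α × α) (InvW (u ++ i :: j :: v)) := by
  set L₁ := u ++ i :: j :: v with hL₁
  set L₂ := u ++ j :: i :: v with hL₂
  obtain ⟨hu, hrest, hdisj⟩ := List.nodup_append'.mp hnd
  have hiu : i ∉ u := fun h => hdisj h (by simp)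
  have hju : j ∉ u := fun h => hdisj h (by simp)
  have hijv : i ∉ j :: v := (List.nodup_cons.mp hrest).1
  have hjv : j ∉ v := (List.nodup_cons.mp (List.nodup_cons.mp hrest).2).1
  have hiv : i ∉ v := fun h => hijv (List.mem_cons_of_mem _ h)
  have hijne : i ≠ j := hij.ne
  have hmem : ∀ a : α, a ∈ L₂ ↔ a ∈ L₁ := by
    intro a; simp only [hL₁, hL₂, List.mem_append, List.mem_cons]; tauto
  have hcase : ∀ a ∈ L₁, a ∈ u ∨ a = i ∨ a = j ∨ a ∈ v := by
    intro a ha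
    simpa only [hL₁, List.mem_append, List.mem_cons, or_assoc] using ha
  have hI1 : L₁.idxOf i = u.length := by
    rw [hL₁, List.idxOf_append_of_notMem hiu, List.idxOf_cons_self]
    omega
  have hJ2 : L₂.idxOf j = u.length := by
    rw [hL₂, List.idxOf_append_of_notMem hju, List.idxOf_cons_self]
    omega
  have hJ1 : L₁.idxOf j = u.length + 1 := by
    rw [hL₁, List.idxOf_append_of_notMem hju, List.idxOf_cons_ne _ hijne,
      List.idxOf_cons_self]
  have hI2 : L₂.idxOf i = u.length + 1 := by
    rw [hL₂, List.idxOf_append_of_notMem hiu, List.idxOf_cons_ne _ (Ne.symm hijne),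
      List.idxOf_cons_self]
  have hU : ∀ a ∈ u, L₁.idxOf a = u.idxOf a ∧ L₂.idxOf a = u.idxOf a ∧
      u.idxOf a < u.length := by
    intro a ha
    exact ⟨by rw [hL₁, List.idxOf_append_of_mem ha],
      by rw [hL₂, List.idxOf_append_of_mem ha], List.idxOf_lt_length_iff.mpr ha⟩
  have hV : ∀ a ∈ v, L₁.idxOf a = u.length + 2 + v.idxOf a ∧
      L₂.idxOf a = u.length + 2 + v.idxOf a := by
    intro a ha
    have hau : a ∉ u := fun h => hdisj h (by simp [ha])
    have hai : i ≠ a := fun h => hiv (h ▸ ha)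
    have haj : j ≠ a := fun h => hjv (h ▸ ha)
    constructor
    · rw [hL₁, List.idxOf_append_of_notMem hau, List.idxOf_cons_ne _ hai,
        List.idxOf_cons_ne _ haj]
      omega
    · rw [hL₂, List.idxOf_append_of_notMem hau, List.idxOf_cons_ne _ haj,
        List.idxOf_cons_ne _ hai]
      omega
  have mono : ∀ a b : α, a ∈ L₁ → b ∈ L₁ → ¬(a = i ∧ b = j) → ¬(a = j ∧ b = i) →
      (L₁.idxOf b < L₁.idxOf a ↔ L₂.idxOf b < L₂.idxOf a) := by
    intro a b ha hb hx1 hx2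
    rcases hcase a ha with hau | rfl | rfl | hav
    · rcases hcase b hb with hbu | rfl | rfl | hbv
      · obtain ⟨e1, e2, e3⟩ := hU a hau; obtain ⟨f1, f2, f3⟩ := hU b hbu; omega
      · obtain ⟨e1, e2, e3⟩ := hU a hau; omega
      · obtain ⟨e1, e2, e3⟩ := hU a hau; omega
      · obtain ⟨e1, e2, e3⟩ := hU a hau; obtain ⟨f1, f2⟩ := hV b hbv; omega
    · rcases hcase b hb with hbu | rfl | rfl | hbv
      · obtain ⟨f1, f2, f3⟩ := hU b hbu; omega
      · omega
      · exact absurd ⟨rfl, rfl⟩ hx1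
      · obtain ⟨f1, f2⟩ := hV b hbv; omega
    · rcases hcase b hb with hbu | rfl | rfl | hbv
      · obtain ⟨f1, f2, f3⟩ := hU b hbu; omega
      · exact absurd ⟨rfl, rfl⟩ hx2
      · omega
      · obtain ⟨f1, f2⟩ := hV b hbv; omega
    · rcases hcase b hb with hbu | rfl | rfl | hbv
      · obtain ⟨e1, e2⟩ := hV a hav; obtain ⟨f1, f2, f3⟩ := hU b hbu; omega
      · obtain ⟨e1, e2⟩ := hV a hav; omega
      · obtain ⟨e1, e2⟩ := hV a hav; omega
      · obtain ⟨e1, e2⟩ := hV a hav; obtain ⟨f1, f2⟩ := hV b hbv; omega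
  ext p
  obtain ⟨a, b⟩ := p
  simp only [InvW, Set.mem_setOf_eq, Set.mem_insert_iff, Prod.mk.injEq]
  constructor
  · rintro ⟨ha, hb, hab, hidx⟩
    by_cases hcs : a = i ∧ b = j
    · exact Or.inl hcs
    · right
      have hx2 : ¬(a = j ∧ b = i) := by
        rintro ⟨rfl, rfl⟩
        exact absurd hab (not_lt.mpr hij.le)
      have ha1 : a ∈ L₁ := (hmem a).mp ha
      have hb1 : b ∈ L₁ := (hmem b).mp hb
      exact ⟨ha1, hb1, hab, (mono a b ha1 hb1 hcs hx2).mpr hidx⟩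
  · rintro (⟨rfl, rfl⟩ | ⟨ha, hb, hab, hidx⟩)
    · refine ⟨by simp [hL₂], by simp [hL₂], hij, by omega⟩
    · have hx1 : ¬(a = i ∧ b = j) := by
        rintro ⟨rfl, rfl⟩
        omega
      have hx2 : ¬(a = j ∧ b = i) := by
        rintro ⟨rfl, rfl⟩
        exact absurd hab (not_lt.mpr hij.le)
      exact ⟨(hmem a).mpr ha, (hmem b).mpr hb, hab, (mono a b ha hb hx1 hx2).mp hidx⟩

lemma invW_cons {a : α} {t : List α} (hnd : (a :: t).Nodup) (p : α × α) :
    p ∈ InvW t ↔ p ∈ InvW (a :: t) ∧ p.1 ≠ a ∧ p.2 ≠ a := by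
  obtain ⟨x, y⟩ := p
  have hat : a ∉ t := (List.nodup_cons.mp hnd).1
  simp only [InvW, Set.mem_setOf_eq]
  constructor
  · rintro ⟨hx, hy, hxy, hidx⟩
    have hxa : x ≠ a := fun h => hat (h ▸ hx)
    have hya : y ≠ a := fun h => hat (h ▸ hy)
    refine ⟨⟨List.mem_cons_of_mem _ hx, List.mem_cons_of_mem _ hy, hxy, ?_⟩, hxa, hya⟩
    rw [List.idxOf_cons_ne _ (Ne.symm hxa), List.idxOf_cons_ne _ (Ne.symm hya)]
    omega
  · rintro ⟨⟨hx, hy, hxy, hidx⟩, hxa, hya⟩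
    rw [List.idxOf_cons_ne _ (Ne.symm hxa), List.idxOf_cons_ne _ (Ne.symm hya)] at hidx
    refine ⟨?_, ?_, hxy, by omega⟩
    · rcases List.mem_cons.mp hx with h | h
      · exact absurd h hxa
      · exact h
    · rcases List.mem_cons.mp hy with h | h
      · exact absurd h hya
      · exact h

lemma eq_of_invW_eq : ∀ (l l' : List α), l.Nodup → l'.Perm l → InvW l = InvW l' →
    l = l' := by
  intro l
  induction l with
  | nil => intro l' _ hp _; exact hp.eq_nil.symm
  | cons a t ih =>
    intro l' hnd hp hinv
    cases l' with
    | nil => exact absurd hp.symm.eq_nil (by simp)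
    | cons a' t' =>
      rcases eq_or_ne a' a with rfl | hne
      · have hnd' : (a' :: t').Nodup := hp.symm.nodup hnd
        have ht : t = t' := by
          refine ih t' (List.nodup_cons.mp hnd).2 hp.cons_inv ?_
          ext p
          rw [invW_cons hnd p, invW_cons hnd' p, hinv]
        rw [ht]
      · exfalso
        have ha : a ∈ t' := by
          have h1 : a ∈ a' :: t' := hp.symm.subset List.mem_cons_self
          rcases List.mem_cons.mp h1 with h | h
          · exact absurd h.symm hne
          · exact h
        have ha' : a' ∈ t := by
          have h1 : a' ∈ a :: t := hp.subset List.mem_cons_self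
          rcases List.mem_cons.mp h1 with h | h
          · exact absurd h hne
          · exact h
        rcases hne.lt_or_gt with hlt | hlt
        · -- a' < a : (a', a) ∈ InvW (a::t) but not in InvW (a'::t')
          have h1 : (a', a) ∈ InvW (a :: t) := by
            refine ⟨List.mem_cons_of_mem _ ha', List.mem_cons_self, hlt, ?_⟩
            rw [List.idxOf_cons_self, List.idxOf_cons_ne _ (Ne.symm hne)]
            omega
          rw [hinv] at h1
          obtain ⟨_, _, _, hbad⟩ := h1
          rw [List.idxOf_cons_self] at hbad
          omega
        · have h1 : (a, a') ∈ InvW (a' :: t') := by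
            refine ⟨List.mem_cons_of_mem _ ha, List.mem_cons_self, hlt, ?_⟩
            rw [List.idxOf_cons_self, List.idxOf_cons_ne _ hne]
            omega
          rw [← hinv] at h1
          obtain ⟨_, _, _, hbad⟩ := h1
          rw [List.idxOf_cons_self] at hbad
          omega


lemma mem_invW_iff {α : Type*} [LinearOrder α] {l : List α} {x y : α} :
    (x, y) ∈ InvW l ↔ x ∈ l ∧ y ∈ l ∧ x < y ∧ l.idxOf y < l.idxOf x := Iff.rfl

/-- Finset of inversions. -/
def invF (l : List α) : Finset (α × α) :=
  Finset.univ.filter (fun p => p.1 ∈ l ∧ p.2 ∈ l ∧ p.1 < p.2 ∧ l.idxOf p.2 < l.idxOf p.1)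

lemma mem_invF {l : List α} {p : α × α} : p ∈ invF l ↔ p ∈ InvW l := by
  simp [invF, InvW, Set.mem_setOf_eq]

lemma exists_adjacent (l l'' : List α) (hnd : l.Nodup) (hperm : l''.Perm l)
    (hsub : InvW l ⊆ InvW l'') (hne : (invF l'' \ invF l).Nonempty) :
    ∃ (u v : List α) (i j : α), i < j ∧ l = u ++ i :: j :: v ∧
      (i, j) ∈ InvW l'' ∧ (i, j) ∉ InvW l := by
  obtain ⟨p₀, hp₀, hmin⟩ := Finset.exists_min_image (invF l'' \ invF l)
    (fun p => l.idxOf p.2 - l.idxOf p.1) hne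
  obtain ⟨a, b⟩ := p₀
  rw [Finset.mem_sdiff] at hp₀
  obtain ⟨hin, hout⟩ := hp₀
  have hin' : (a, b) ∈ InvW l'' := mem_invF.mp hin
  obtain ⟨ha'', hb'', hab, hidx''⟩ := mem_invW_iff.mp hin'
  have hal : a ∈ l := hperm.subset ha''
  have hbl : b ∈ l := hperm.subset hb''
  have hnotinv : ¬ (l.idxOf b < l.idxOf a) := by
    intro h
    exact hout (mem_invF.mpr (mem_invW_iff.mpr ⟨hal, hbl, hab, h⟩))
  have hidxne : l.idxOf a ≠ l.idxOf b := by
    intro h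
    exact hab.ne ((List.idxOf_inj hal).mp h)
  have hlt : l.idxOf a < l.idxOf b := by omega
  have hka : l.idxOf a < l.length := List.idxOf_lt_length_iff.mpr hal
  have hstep : l.idxOf b = l.idxOf a + 1 := by
    by_contra hx
    have h2 : l.idxOf a + 1 < l.idxOf b := by omega
    have hkb : l.idxOf a + 1 < l.length := lt_trans h2 (List.idxOf_lt_length_iff.mpr hbl)
    set c := l[l.idxOf a + 1]'hkb with hcdef
    have hc : l.idxOf c = l.idxOf a + 1 := List.Nodup.idxOf_getElem hnd _ hkb
    have hcl : c ∈ l := List.getElem_mem hkb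
    have hcl'' : c ∈ l'' := hperm.mem_iff.mpr hcl
    have hca : c ≠ a := by intro h; rw [h] at hc; omega
    have hcb : c ≠ b := by intro h; rw [h] at hc; omega
    have hsmaller : ∀ (x y : α), x ∈ l → y ∈ l → x < y →
        l.idxOf x < l.idxOf y → l''.idxOf y < l''.idxOf x →
        l.idxOf y - l.idxOf x < l.idxOf b - l.idxOf a → False := by
      intro x y hx hy hxy hno hyes hgap
      have hx'' : x ∈ l'' := hperm.mem_iff.mpr hx
      have hy'' : y ∈ l'' := hperm.mem_iff.mpr hy
      have hmemd : (x, y) ∈ invF l'' \ invF l := by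
        rw [Finset.mem_sdiff, mem_invF, mem_invF]
        refine ⟨mem_invW_iff.mpr ⟨hx'', hy'', hxy, hyes⟩, ?_⟩
        intro hcontra
        obtain ⟨_, _, _, hbad⟩ := mem_invW_iff.mp hcontra
        omega
      have := hmin _ hmemd
      change l.idxOf b - l.idxOf a ≤ l.idxOf y - l.idxOf x at this
      omega
    rcases lt_trichotomy c a with hlt1 | heq1 | hlt1
    · have h1 : (c, a) ∈ InvW l := mem_invW_iff.mpr ⟨hcl, hal, hlt1, by omega⟩
      obtain ⟨_, _, _, h3⟩ := mem_invW_iff.mp (hsub h1)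
      exact hsmaller c b hcl hbl (lt_trans hlt1 hab) (by omega) (by omega) (by omega)
    · exact hca heq1
    · rcases lt_trichotomy c b with hlt2 | heq2 | hlt2
      · by_cases hcc : l''.idxOf c < l''.idxOf a
        · exact hsmaller a c hal hcl hlt1 (by omega) hcc (by omega)
        · exact hsmaller c b hcl hbl hlt2 (by omega) (by omega) (by omega)
      · exact hcb heq2
      · have h1 : (b, c) ∈ InvW l := mem_invW_iff.mpr ⟨hbl, hcl, hlt2, by omega⟩
        obtain ⟨_, _, _, h3⟩ := mem_invW_iff.mp (hsub h1)
        exact hsmaller a c hal hcl (lt_trans hab hlt2) (by omega) (by omega) (by omega)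
  have hkb : l.idxOf a + 1 < l.length := by
    rw [← hstep]
    exact List.idxOf_lt_length_iff.mpr hbl
  have e1 : l.drop (l.idxOf a) = a :: l.drop (l.idxOf a + 1) := by
    rw [List.drop_eq_getElem_cons hka, List.getElem_idxOf hka]
  have e2 : l.drop (l.idxOf a + 1) = b :: l.drop (l.idxOf a + 2) := by
    rw [List.drop_eq_getElem_cons hkb]
    congr 1
    · have h5 : l[l.idxOf b]? = some b := List.getElem?_idxOf hbl
      rw [hstep] at h5
      rw [List.getElem?_eq_getElem hkb] at h5
      exact Option.some_inj.mp h5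
  refine ⟨l.take (l.idxOf a), l.drop (l.idxOf a + 2), a, b, hab, ?_,
    mem_invW_iff.mpr ⟨ha'', hb'', hab, hidx''⟩, fun hq => hout (mem_invF.mpr hq)⟩
  conv_lhs => rw [← List.take_append_drop (l.idxOf a) l]
  rw [e1, e2]

lemma rtg_step_perm {l l' : List α} (h : Relation.ReflTransGen Step l l') : l'.Perm l := by
  induction h with
  | refl => exact List.Perm.refl _
  | tail _ hbc ih => exact (step_perm hbc).trans ih

lemma rtg_step_inv {l l' : List α} (hnd : l.Nodup)
    (h : Relation.ReflTransGen Step l l') : InvW l ⊆ InvW l' := by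
  induction h with
  | refl => exact subset_rfl
  | @tail b c hab hbc ih =>
    refine ih.trans ?_
    have hndb : b.Nodup := (rtg_step_perm hab).symm.nodup hnd
    obtain ⟨u, v, i, j, hij, hb, hc⟩ := hbc
    subst hb hc
    rw [step_invW hij hndb]
    exact Set.subset_insert _ _

lemma rtg_of_inv_subset (l'' : List α) : ∀ (k : ℕ) (l : List α),
    (invF l'' \ invF l).card ≤ k → l.Nodup → l''.Perm l → InvW l ⊆ InvW l'' →
    Relation.ReflTransGen Step l l'' := by
  intro k
  induction k with
  | zero =>
    intro l hcard hnd hperm hsub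
    have hempty : invF l'' \ invF l = ∅ :=
      Finset.card_eq_zero.mp (le_antisymm hcard (Nat.zero_le _))
    have hsub' : InvW l'' ⊆ InvW l := by
      intro p hp
      by_contra hq
      have hmm : p ∈ invF l'' \ invF l :=
        Finset.mem_sdiff.mpr ⟨mem_invF.mpr hp, fun h => hq (mem_invF.mp h)⟩
      rw [hempty] at hmm
      simp at hmm
    have : l = l'' := eq_of_invW_eq l l'' hnd hperm (Set.Subset.antisymm hsub hsub')
    rw [this]
  | succ k ih =>
    intro l hcard hnd hperm hsub
    by_cases heq : l = l''
    · rw [heq]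
    · have hne : (invF l'' \ invF l).Nonempty := by
        rw [Finset.nonempty_iff_ne_empty]
        intro hempty
        apply heq
        refine eq_of_invW_eq l l'' hnd hperm (Set.Subset.antisymm hsub ?_)
        intro p hp
        by_contra hq
        have hmm : p ∈ invF l'' \ invF l :=
          Finset.mem_sdiff.mpr ⟨mem_invF.mpr hp, fun h => hq (mem_invF.mp h)⟩
        rw [hempty] at hmm
        simp at hmm
      obtain ⟨u, v, i, j, hij, hl, hmem'', hnotl⟩ := exists_adjacent l l'' hnd hperm hsub hne
      have hstep : Step l (u ++ j :: i :: v) := ⟨u, v, i, j, hij, hl, rfl⟩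
      have hndl : (u ++ i :: j :: v).Nodup := hl ▸ hnd
      have hInv2 : InvW (u ++ j :: i :: v) = insert (i, j) (InvW l) := by
        rw [step_invW hij hndl, hl]
      have hsub2 : InvW (u ++ j :: i :: v) ⊆ InvW l'' := by
        rw [hInv2]
        exact Set.insert_subset hmem'' hsub
      have hnd2 : (u ++ j :: i :: v).Nodup := (step_perm hstep).symm.nodup hnd
      have hperm2 : l''.Perm (u ++ j :: i :: v) := hperm.trans (step_perm hstep).symm
      have hcard2 : (invF l'' \ invF (u ++ j :: i :: v)).card ≤ k := by
        have hijm : (i, j) ∈ invF l'' \ invF l :=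
          Finset.mem_sdiff.mpr ⟨mem_invF.mpr hmem'', fun h => hnotl (mem_invF.mp h)⟩
        have hss : invF l'' \ invF (u ++ j :: i :: v) ⊆ (invF l'' \ invF l).erase (i, j) := by
          intro p hp
          rw [Finset.mem_sdiff] at hp
          rw [Finset.mem_erase, Finset.mem_sdiff]
          refine ⟨?_, hp.1, ?_⟩
          · intro hpe
            exact hp.2 (mem_invF.mpr (by rw [hInv2, hpe]; exact Set.mem_insert _ _))
          · intro hpl
            exact hp.2 (mem_invF.mpr (by rw [hInv2]; exact Set.mem_insert_of_mem _ (mem_invF.mp hpl)))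
        have h1 := Finset.card_le_card hss
        have h3 := Finset.card_erase_of_mem hijm
        have h4 : 0 < (invF l'' \ invF l).card := Finset.card_pos.mpr ⟨_, hijm⟩
        omega
      exact Relation.ReflTransGen.head hstep (ih _ hcard2 hnd2 hperm2 hsub2)
  
end Words

section Bridge

variable {n : ℕ}
variable (lab : Finset (Fin n) → Finset (Fin n) → Fin n)
variable (hlab : ∀ (B : Finset (Fin n)) (i : Fin n), i ∉ B → lab B (insert i B) = i)

include hlab

lemma move_step {m m' : MaxChain (Finset (Fin n))} (h : ELPolygonMove lab m m') :
    Step (labelSeq lab m.elems) (labelSeq lab m'.elems) := by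
  obtain ⟨a, c, b, x, w, y, hm, hm', hcne, hwc, hasc, hdesc⟩ := h
  have hinfix1 : (x :: (c ++ [y])).Chain' (· ⋖ ·) := by
    refine List.IsChain.infix m.chain' ⟨a, b, ?_⟩
    rw [hm]; simp
  have hinfix2 : ([x, w, y] : List (Finset (Fin n))).Chain' (· ⋖ ·) := by
    refine List.IsChain.infix m'.chain' ⟨a, b, ?_⟩
    rw [hm']; simp
  have hsat1 : IsSatChain (x :: (c ++ [y])) x y := by
    refine ⟨hinfix1, rfl, ?_⟩
    rw [show x :: (c ++ [y]) = (x :: c) ++ [y] from rfl, List.getLast?_concat]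
  have hsat2 : IsSatChain [x, w, y] x y := ⟨hinfix2, rfl, by simp⟩
  have hcard1 := (sat_facts lab hlab hsat1).2.2.2.2.2
  have hcard2 := (sat_facts lab hlab hsat2).2.2.2.2.2
  have hlen1 : (labelSeq lab (x :: (c ++ [y]))).length = c.length + 1 := by
    rw [labelSeq_length]; simp
  have hlen2 : (labelSeq lab ([x, w, y] : List (Finset (Fin n)))).length = 2 := by
    rw [labelSeq_length]; simp
  have hc1 : c.length = 1 := by
    rw [hlen1] at hcard1; rw [hlen2] at hcard2; omega
  obtain ⟨v0, rfl⟩ := List.length_eq_one_iff.mp hc1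
  have hwin : ([x, v0, y] : List (Finset (Fin n))).Chain' (· ⋖ ·) := by
    simpa using hinfix1
  have hxv : x ⋖ v0 := (List.isChain_cons_cons.mp hwin).1
  have hvy : v0 ⋖ y := (List.isChain_cons_cons.mp (List.isChain_cons_cons.mp hwin).2).1
  obtain ⟨hi0x', hveq'⟩ := cov_lab lab hlab hxv
  obtain ⟨i0, hi0x, hveq, hli0⟩ : ∃ i0, i0 ∉ x ∧ v0 = insert i0 x ∧ lab x v0 = i0 :=
    ⟨_, hi0x', hveq', rfl⟩
  obtain ⟨hj0v', hyeq'1⟩ := cov_lab lab hlab hvy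
  obtain ⟨j0, hj0v, hyeq, hlj0⟩ : ∃ j0, j0 ∉ v0 ∧ y = insert j0 v0 ∧ lab v0 y = j0 :=
    ⟨_, hj0v', hyeq'1, rfl⟩
  have hij0 : i0 < j0 := by
    have hle : i0 ≤ j0 := by
      have h2 := hasc
      unfold AscLabels at h2
      rw [show (x :: ([v0] ++ [y])) = [x, v0, y] from by simp, labelSeq_cons_cons] at h2
      have := (List.isChain_cons_cons.mp h2).1
      rwa [hli0, hlj0] at this
    refine lt_of_le_of_ne hle ?_
    intro h2
    apply hj0v
    rw [hveq, h2]
    exact Finset.mem_insert_self _ _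
  have hxw : x ⋖ w := (List.isChain_cons_cons.mp hinfix2).1
  have hwy : w ⋖ y := (List.isChain_cons_cons.mp (List.isChain_cons_cons.mp hinfix2).2).1
  obtain ⟨ha0x', hweq'⟩ := cov_lab lab hlab hxw
  obtain ⟨a0, ha0x, hweq, hla0⟩ : ∃ a0, a0 ∉ x ∧ w = insert a0 x ∧ lab x w = a0 :=
    ⟨_, ha0x', hweq', rfl⟩
  obtain ⟨hb0w', hyeq2'⟩ := cov_lab lab hlab hwy
  obtain ⟨b0, hb0w, hyeq2, hlb0⟩ : ∃ b0, b0 ∉ w ∧ y = insert b0 w ∧ lab w y = b0 :=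
    ⟨_, hb0w', hyeq2', rfl⟩
  have hba : b0 < a0 := by
    have := not_le.mp hdesc
    rwa [hla0, hlb0] at this
  have hkey : a0 = j0 ∧ b0 = i0 := by
    have hy1 : y = insert j0 (insert i0 x) := by rw [hyeq, hveq]
    have hy2 : y = insert b0 (insert a0 x) := by rw [hyeq2, hweq]
    have ha0mem : a0 = j0 ∨ a0 = i0 := by
      have hmem : a0 ∈ y := by
        rw [hy2]; exact Finset.mem_insert_of_mem (Finset.mem_insert_self _ _)
      rw [hy1] at hmem
      simp only [Finset.mem_insert] at hmem
      rcases hmem with h2 | h2 | h2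
      · exact Or.inl h2
      · exact Or.inr h2
      · exact absurd h2 ha0x
    have hb0mem : b0 = j0 ∨ b0 = i0 := by
      have hmem : b0 ∈ y := by rw [hy2]; exact Finset.mem_insert_self _ _
      rw [hy1] at hmem
      simp only [Finset.mem_insert] at hmem
      rcases hmem with h2 | h2 | h2
      · exact Or.inl h2
      · exact Or.inr h2
      · exfalso
        apply hb0w
        rw [hweq]
        exact Finset.mem_insert_of_mem h2
    rcases ha0mem with h2 | h2
    · refine ⟨h2, ?_⟩
      rcases hb0mem with h3 | h3
      · exfalso; rw [h2, h3] at hba; exact lt_irrefl _ hba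
      · exact h3
    · exfalso
      rcases hb0mem with h3 | h3
      · rw [h2, h3] at hba
        exact absurd hij0 (not_lt.mpr hba.le)
      · rw [h2, h3] at hba
        exact lt_irrefl _ hba
  refine ⟨labelSeq lab (a ++ [x]), labelSeq lab (y :: b), i0, j0, hij0, ?_, ?_⟩
  · rw [hm, show x :: ([v0] ++ y :: b) = x :: v0 :: y :: b from by simp,
      labelSeq_append lab a x (v0 :: y :: b), labelSeq_cons_cons, labelSeq_cons_cons,
      hli0, hlj0]
  · rw [hm', labelSeq_append lab a x (w :: y :: b), labelSeq_cons_cons, labelSeq_cons_cons,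
      hla0, hlb0, hkey.1, hkey.2]

omit hlab in
lemma decomp : ∀ (u : List (Fin n)) (c : List (Finset (Fin n))) (i j : Fin n) (v' : List (Fin n)),
    labelSeq lab c = u ++ i :: j :: v' →
    ∃ (a : List (Finset (Fin n))) (x vm y : Finset (Fin n)) (b : List (Finset (Fin n))),
      c = a ++ x :: vm :: y :: b ∧ labelSeq lab (a ++ [x]) = u := by
  intro u
  induction u with
  | nil =>
    intro c i j v' h
    rw [List.nil_append] at h
    cases c with
    | nil => simp [labelSeq_nil] at h
    | cons x c1 =>
      cases c1 with
      | nil => simp [labelSeq_singleton] at h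
      | cons z t =>
        rw [labelSeq_cons_cons] at h
        injection h with h1 h2
        cases t with
        | nil => simp [labelSeq_singleton] at h2
        | cons y0 t' =>
          exact ⟨[], x, z, y0, t', by simp, by simp [labelSeq_singleton]⟩
  | cons e u' ih =>
    intro c i j v' h
    cases c with
    | nil => simp [labelSeq_nil] at h
    | cons x0 c1 =>
      cases c1 with
      | nil => simp [labelSeq_singleton] at h
      | cons r t =>
        rw [labelSeq_cons_cons, List.cons_append] at h
        injection h with h1 h2
        obtain ⟨a', x, vm, y, b, hc, hu⟩ := ih (r :: t) i j v' h2
        refine ⟨x0 :: a', x, vm, y, b, by rw [List.cons_append, ← hc], ?_⟩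
        have hhead : (a' ++ [x]).head? = some r := by
          have h3 : (a' ++ [x]).head? = (a' ++ x :: vm :: y :: b).head? :=
            (head?_append_cons a' x _).symm
          rw [h3, ← hc]
          rfl
        rw [show (x0 :: a') ++ [x] = x0 :: (a' ++ [x]) from rfl,
          labelSeq_cons_head lab hhead, hu, h1]

lemma step_move (m : MaxChain (Finset (Fin n))) (u v' : List (Fin n)) (i j : Fin n)
    (hij : i < j) (hm : labelSeq lab m.elems = u ++ i :: j :: v') :
    ∃ m' : MaxChain (Finset (Fin n)), ELPolygonMove lab m m' ∧
      labelSeq lab m'.elems = u ++ j :: i :: v' := by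
  obtain ⟨a, x, vm, y, b, hc, hu⟩ := decomp lab u m.elems i j v' hm
  have hsplit : labelSeq lab m.elems =
      labelSeq lab (a ++ [x]) ++ labelSeq lab (x :: vm :: y :: b) := by
    rw [hc]; exact labelSeq_append lab a x (vm :: y :: b)
  have hwin : labelSeq lab (x :: vm :: y :: b) = i :: j :: v' := by
    rw [hsplit, hu] at hm
    exact List.append_cancel_left hm
  rw [labelSeq_cons_cons, labelSeq_cons_cons] at hwin
  injection hwin with h1 hwin
  injection hwin with h2 h3
  have hchain := m.chain'
  rw [hc] at hchain
  have hwinchain : (x :: vm :: y :: b).Chain' (· ⋖ ·) := List.IsChain.infix hchain ⟨a, [], by simp⟩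
  have hxv : x ⋖ vm := (List.isChain_cons_cons.mp hwinchain).1
  have hrest := (List.isChain_cons_cons.mp hwinchain).2
  have hvy : vm ⋖ y := (List.isChain_cons_cons.mp hrest).1
  have hyb : (y :: b).Chain' (· ⋖ ·) := (List.isChain_cons_cons.mp hrest).2
  obtain ⟨hix, hvm⟩ := cov_lab lab hlab hxv
  obtain ⟨hjv, hy⟩ := cov_lab lab hlab hvy
  rw [h1] at hix hvm
  rw [h2] at hjv hy
  have hjx : j ∉ x := fun hh => hjv (hvm ▸ Finset.mem_insert_of_mem hh)
  have hxw : x ⋖ insert j x := Finset.covBy_insert hjx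
  have hiw : i ∉ insert j x := by
    simp only [Finset.mem_insert, not_or]
    exact ⟨hij.ne, hix⟩
  have hyw : y = insert i (insert j x) := by rw [hy, hvm, Finset.insert_comm]
  have hwy : insert j x ⋖ y := by rw [hyw]; exact Finset.covBy_insert hiw
  have hlabxw : lab x (insert j x) = j := hlab x j hjx
  have hlabwy : lab (insert j x) y = i := by rw [hyw]; exact hlab _ i hiw
  have hchain2 : (a ++ x :: insert j x :: y :: b).Chain' (· ⋖ ·) := by
    rw [List.Chain', List.isChain_append] at hchain ⊢
    refine ⟨hchain.1, ?_, ?_⟩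
    · rw [List.isChain_cons_cons, List.isChain_cons_cons]
      exact ⟨hxw, hwy, hyb⟩
    · intro p hp q hq
      apply hchain.2.2 p hp q
      simp only [List.head?_cons, Option.mem_def, Option.some.injEq] at hq ⊢
      exact hq
  have hhead2 : (a ++ x :: insert j x :: y :: b).head? = some ⊥ := by
    rw [head?_append_cons a x (insert j x :: y :: b), ← head?_append_cons a x (vm :: y :: b),
      ← hc]
    exact m.head_bot
  have hlast2 : (a ++ x :: insert j x :: y :: b).getLast? = some ⊤ := by
    rw [show a ++ x :: insert j x :: y :: b = (a ++ [x, insert j x]) ++ y :: b from by simp,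
      List.getLast?_append_cons]
    have h4 := m.last_top
    rw [hc, show a ++ x :: vm :: y :: b = (a ++ [x, vm]) ++ y :: b from by simp,
      List.getLast?_append_cons] at h4
    exact h4
  refine ⟨⟨a ++ x :: insert j x :: y :: b, hchain2, hhead2, hlast2⟩, ?_, ?_⟩
  · refine ⟨a, [vm], b, x, insert j x, y, by rw [hc]; simp, rfl, by simp, ?_, ?_, ?_⟩
    · intro hww
      rw [List.mem_singleton] at hww
      apply hjv
      rw [← hww]
      exact Finset.mem_insert_self _ _
    · unfold AscLabels
      rw [show x :: ([vm] ++ [y]) = [x, vm, y] from by simp, labelSeq_cons_cons,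
        labelSeq_cons_cons, h1, h2, labelSeq_singleton]
      exact List.isChain_cons_cons.mpr ⟨hij.le, List.isChain_singleton _⟩
    · rw [hlabxw, hlabwy]
      exact not_le.mpr hij
  · show labelSeq lab (a ++ x :: insert j x :: y :: b) = u ++ j :: i :: v'
    rw [labelSeq_append lab a x (insert j x :: y :: b), hu, labelSeq_cons_cons,
      labelSeq_cons_cons, hlabxw, hlabwy, h3]

lemma maxchain_label_facts (m : MaxChain (Finset (Fin n))) :
    (labelSeq lab m.elems).Nodup ∧ (labelSeq lab m.elems).Perm (List.finRange n) := by
  have hsat : IsSatChain m.elems ⊥ ⊤ := ⟨m.chain', m.head_bot, m.last_top⟩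
  obtain ⟨_, hnd, _, hun, _, _⟩ := sat_facts lab hlab hsat
  refine ⟨hnd, List.perm_of_nodup_nodup_toFinset_eq hnd (List.nodup_finRange n) ?_⟩
  rw [List.toFinset_finRange]
  simpa [Finset.top_eq_univ] using hun

lemma elcd_iff (m m' : MaxChain (Finset (Fin n))) :
    ELCDLe lab m m' ↔ InvW (labelSeq lab m.elems) ⊆ InvW (labelSeq lab m'.elems) := by
  obtain ⟨hnd, hperm⟩ := maxchain_label_facts lab hlab m
  obtain ⟨hnd', hperm'⟩ := maxchain_label_facts lab hlab m'
  constructor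
  · intro h
    have hrtg : Relation.ReflTransGen Step (labelSeq lab m.elems) (labelSeq lab m'.elems) := by
      unfold ELCDLe at h
      clear hnd' hperm'
      induction h with
      | refl => exact Relation.ReflTransGen.refl
      | tail hab hbc ih => exact ih.tail (move_step lab hlab hbc)
    exact rtg_step_inv hnd hrtg
  · intro hsub
    have hp2 : (labelSeq lab m'.elems).Perm (labelSeq lab m.elems) := hperm'.trans hperm.symm
    have hrtg := rtg_of_inv_subset (labelSeq lab m'.elems) _ (labelSeq lab m.elems)
      le_rfl hnd hp2 hsub
    have lift : ∀ l', Relation.ReflTransGen Step (labelSeq lab m.elems) l' →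
        ∃ m'', ELCDLe lab m m'' ∧ labelSeq lab m''.elems = l' := by
      intro l' h
      induction h with
      | refl => exact ⟨m, Relation.ReflTransGen.refl, rfl⟩
      | @tail lb lc hab hbc ih =>
        obtain ⟨m₁, hle, hl₁⟩ := ih
        obtain ⟨u, v, i, j, hij, hb, hcc⟩ := hbc
        obtain ⟨m₂, hmove, hl₂⟩ := step_move lab hlab m₁ u v i j hij (by rw [hl₁, hb])
        exact ⟨m₂, hle.tail hmove, by rw [hl₂, hcc]⟩
    obtain ⟨m'', hle, heq⟩ := lift _ hrtg
    have h5 : m'' = m' := labels_inj lab hlab m'' m' heq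
    rwa [h5] at hle

end Bridge

end S17

/-- the standard labeling of the Boolean lattice `Bₙ` (labeling
the cover `B ⋖ B ∪ {i}` by `i`) is an EL-labeling, and the map sending each
maximal chain to its label sequence (read as the one-line notation of a
permutation) is an order isomorphism from the maximal chain descent order
`C(Bₙ,λ)` onto the weak order on `Sₙ` (ordered by containment of inversion
sets): it is injective, its image is all permutations, and it is an order
embedding. -/
theorem statement17 (n : ℕ) (lab : Finset (Fin n) → Finset (Fin n) → Fin n)
    (hlab : ∀ (B : Finset (Fin n)) (i : Fin n), i ∉ B → lab B (insert i B) = i) :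
    IsELLabeling lab ∧
      (∀ m m' : MaxChain (Finset (Fin n)),
        labelSeq lab m.elems = labelSeq lab m'.elems → m = m') ∧
      (∀ l : List (Fin n), List.Perm l (List.finRange n) →
        ∃ m : MaxChain (Finset (Fin n)), labelSeq lab m.elems = l) ∧
      (∀ m m' : MaxChain (Finset (Fin n)),
        ELCDLe lab m m' ↔
          InvW (labelSeq lab m.elems) ⊆ InvW (labelSeq lab m'.elems)) := by
  exact ⟨S17.el_labeling lab hlab, fun m m' h => S17.labels_inj lab hlab m m' h,
    fun l hp => S17.labels_surj lab hlab l hp, fun m m' => S17.elcd_iff lab hlab m m'⟩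
end
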